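/- arXiv:2304.09422 — 5 statements merged into one kernel-verified Lean document; each statement's English description precedes it below -/
import Mathlib

section
/- Let η be a resolution derivation (viewed as a DAG) of a clause C whose support is contained in the W variables, and suppose η uses at least one axiom A_{i,b} from the family X. Then for every index i in [mℓ], η uses at least one of the axioms A_{i,0}, A_{i,1}. -/
open Finset

abbrev Lit (V : Type) := V × Bool
abbrev Clause (V : Type) := Finset (Lit V)

def Lit.negate {V : Type} (l : Lit V) : Lit V := (l.1, !l.2)

/-- Justification of a proof line: `none` = axiom; `Sum.inl (i,j,x)` = resolution of
lines `i,j` on pivot variable `x`; `Sum.inr i` = weakening of line `i`. -/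
abbrev Just (V : Type) := (ℕ × ℕ × V) ⊕ ℕ

structure Deriv (V : Type) where
  lines : List (Clause V × Option (Just V))

namespace Deriv

variable {V : Type} [DecidableEq V]

def length (π : Deriv V) : ℕ := π.lines.length

def clause (π : Deriv V) (i : ℕ) : Clause V := (π.lines.getD i (∅, none)).1

def just (π : Deriv V) (i : ℕ) : Option (Just V) := (π.lines.getD i (∅, none)).2

def lastClause (π : Deriv V) : Clause V := π.clause (π.length - 1)

def resolve (A B : Clause V) (x : V) : Clause V := A.erase (x, true) ∪ B.erase (x, false)

def ValidLine (Ax : Set (Clause V)) (w : Bool) (π : Deriv V) (k : ℕ) : Prop :=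
  match π.just k with
  | none => π.clause k ∈ Ax
  | some (Sum.inl (i, j, x)) =>
      i < k ∧ j < k ∧ (x, true) ∈ π.clause i ∧ (x, false) ∈ π.clause j ∧
        π.clause k = resolve (π.clause i) (π.clause j) x
  | some (Sum.inr i) => w = true ∧ i < k ∧ π.clause i ⊆ π.clause k

/-- valid resolution derivation (no weakening) from axiom set `Ax` -/
def Valid (Ax : Set (Clause V)) (π : Deriv V) : Prop :=
  0 < π.length ∧ ∀ k < π.length, ValidLine Ax false π k

/-- valid resolution derivation with weakening allowed -/
def ValidW (Ax : Set (Clause V)) (π : Deriv V) : Prop :=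
  0 < π.length ∧ ∀ k < π.length, ValidLine Ax true π k

/-- line `k` is a resolution step whose two premises share a literal besides the pivot -/
def IsMergeLine (π : Deriv V) (k : ℕ) : Prop :=
  ∃ i j x, π.just k = some (Sum.inl (i, j, x)) ∧
    ∃ l, l ∈ (π.clause i).erase (x, true) ∧ l ∈ (π.clause j).erase (x, false)

def IsAxiomLine (π : Deriv V) (k : ℕ) : Prop := k < π.length ∧ π.just k = none

def IsParent (π : Deriv V) (i k : ℕ) : Prop :=
  (∃ j x, π.just k = some (Sum.inl (i, j, x)) ∨ π.just k = some (Sum.inl (j, i, x))) ∨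
    π.just k = some (Sum.inr i)

/-- reachability in the proof DAG -/
inductive Reaches (π : Deriv V) : ℕ → ℕ → Prop
  | refl (i : ℕ) : Reaches π i i
  | step {i j k : ℕ} : Reaches π i j → IsParent π j k → Reaches π i k

/-- the derivation uses the axiom clause `A`: some axiom line carries `A` and the final
line is reachable from it in the proof DAG -/
def UsesAxiom (π : Deriv V) (A : Clause V) : Prop :=
  ∃ i, IsAxiomLine π i ∧ π.clause i = A ∧ Reaches π i (π.length - 1)

/-- input derivation: every resolution step has at least one premise that is an axiom line -/
def Input (π : Deriv V) : Prop :=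
  ∀ k i j x, π.just k = some (Sum.inl (i, j, x)) → π.just i = none ∨ π.just j = none

/-- tree-like: every line is a premise of at most one line -/
def TreeLike (π : Deriv V) : Prop :=
  ∀ i k₁ k₂, IsParent π i k₁ → IsParent π i k₂ → k₁ = k₂

def vars (C : Clause V) : Finset V := C.image Prod.fst

/-- strongly regular: once a variable is used as pivot it never occurs in a later clause -/
def StronglyRegular (π : Deriv V) : Prop :=
  ∀ k i j x, π.just k = some (Sum.inl (i, j, x)) →
    ∀ k', k ≤ k' → k' < π.length → x ∉ vars (π.clause k')

/-- resolution with merge ancestors: every line used as a premise more than once has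
an ancestor in the proof DAG that is a merge -/
def RMA (π : Deriv V) : Prop :=
  ∀ i, (∃ k₁ k₂, k₁ ≠ k₂ ∧ IsParent π i k₁ ∧ IsParent π i k₂) →
    ∃ a, Reaches π a i ∧ IsMergeLine π a

end Deriv

def seqGet {V : Type} (S : List (Deriv V)) (t : ℕ) : Deriv V := S.getD t ⟨[]⟩

def seqLength {V : Type} (S : List (Deriv V)) : ℕ := (S.map Deriv.length).sum

/-- input-structured sequence over axiom set `Ax`: each constituent is a valid input
derivation which may use the final clauses (lemmas) of earlier constituents as axioms;
`w` tells whether weakening is allowed -/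
def SeqValid {V : Type} [DecidableEq V] (Ax : Set (Clause V)) (S : List (Deriv V))
    (w : Bool) : Prop :=
  S ≠ [] ∧ ∀ t < S.length,
    (cond w Deriv.ValidW Deriv.Valid)
        (Ax ∪ {C | ∃ t' < t, C = (seqGet S t').lastClause}) (seqGet S t) ∧
      (seqGet S t).Input

/-- every lemma (last clause of a non-final constituent) is derived by a merge step -/
def MergeLemmas {V : Type} [DecidableEq V] (S : List (Deriv V)) : Prop :=
  ∀ t, t + 1 < S.length → (seqGet S t).IsMergeLine ((seqGet S t).length - 1)

def LocallyRegular {V : Type} [DecidableEq V] (S : List (Deriv V)) : Prop :=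
  ∀ t < S.length, (seqGet S t).StronglyRegular

/-- variables of the formula `F_{ℓ,m,n}`: `Sum.inl i` is the X variable `x_i`,
`Sum.inr (j,k)` is the W variable `w_{j,k}` -/
abbrev FV := ℕ ⊕ (ℕ × ℕ)

def xl (i : ℕ) (b : Bool) : Lit FV := (Sum.inl i, b)
def wl (j k : ℕ) (b : Bool) : Lit FV := (Sum.inr (j, k), b)

/-- the W axiom encoding one direction of `w_{j,k} = w_{j,k+1}` -/
def Wax (j k : ℕ) (b : Bool) : Clause FV :=
  if b then {wl j k true, wl j (k + 1) false} else {wl j k false, wl j (k + 1) true}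

def Waxioms (l n : ℕ) : Set (Clause FV) :=
  {C | ∃ j k b, 1 ≤ j ∧ j ≤ l ∧ 1 ≤ k ∧ k ≤ n - 1 ∧ C = Wax j k b}

/-- canonical form of `i` modulo `l` in `[l]` -/
def ihat (l i : ℕ) : ℕ := if i % l = 0 then l else i % l

/-- the X axiom `A_{i,b}`, with the conventions `x_0 = 1` and `x_{mℓ} = 0` -/
def Xax (l m n i : ℕ) (b : Bool) : Clause FV :=
  ({wl (ihat l i) 1 b, wl (ihat l i) n b} : Clause FV)
    ∪ (if i = 1 then ∅ else {xl (i - 1) false})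
    ∪ (if i = m * l then ∅ else {xl i true})

def Xaxioms (l m n : ℕ) : Set (Clause FV) :=
  {C | ∃ i b, 1 ≤ i ∧ i ≤ m * l ∧ C = Xax l m n i b}

def Fformula (l m n : ℕ) : Set (Clause FV) := Waxioms l n ∪ Xaxioms l m n

/-- `μ(C)`: the number of distinct W-blocks mentioned by `C` -/
def mu (C : Clause FV) : ℕ :=
  ((C.filter fun lit => lit.1.isRight = true).image
    fun lit => (lit.1.getRight?.getD (0, 0)).1).card

def Wsupported (C : Clause FV) : Prop := ∀ lit ∈ C, lit.1.isRight = true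

namespace Deriv

variable {V : Type} [DecidableEq V]

theorem Reaches.trans' {π : Deriv V} {a b c : ℕ} (h1 : Reaches π a b) (h2 : Reaches π b c) :
    Reaches π a c := by
  induction h2 with
  | refl => exact h1
  | step h p ih => exact Reaches.step ih p

theorem litToAxiom {Ax : Set (Clause V)} {π : Deriv V} (hv : π.Valid Ax) :
    ∀ t, t < π.length → ∀ lit ∈ π.clause t,
      ∃ a, π.IsAxiomLine a ∧ lit ∈ π.clause a ∧ π.Reaches a t := by
  intro t
  induction t using Nat.strong_induction_on with
  | _ t ih =>
    intro ht lit hlit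
    have hvt := hv.2 t ht
    unfold ValidLine at hvt
    cases hj : π.just t with
    | none => exact ⟨t, ⟨ht, hj⟩, hlit, Reaches.refl t⟩
    | some s =>
      cases s with
      | inl p =>
        obtain ⟨i, j, x⟩ := p
        rw [hj] at hvt
        obtain ⟨hi, hjj, _, _, hres⟩ := hvt
        rw [hres] at hlit
        unfold resolve at hlit
        rcases Finset.mem_union.mp hlit with h | h
        · obtain ⟨a, ha, hla, hr⟩ := ih i hi (hi.trans ht) lit (Finset.mem_of_mem_erase h)
          exact ⟨a, ha, hla, hr.step (Or.inl ⟨j, x, Or.inl hj⟩)⟩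
        · obtain ⟨a, ha, hla, hr⟩ := ih j hjj (hjj.trans ht) lit (Finset.mem_of_mem_erase h)
          exact ⟨a, ha, hla, hr.step (Or.inl ⟨i, x, Or.inr hj⟩)⟩
      | inr i =>
        rw [hj] at hvt
        exact absurd hvt.1 (by simp)

theorem litSurvives {Ax : Set (Clause V)} {π : Deriv V} (hv : π.Valid Ax) :
    ∀ {k t : ℕ}, π.Reaches k t → t < π.length → ∀ lit ∈ π.clause k,
      lit ∈ π.clause t ∨ ∃ j, j < π.length ∧ π.Reaches j t ∧ lit.negate ∈ π.clause j := by
  intro k t h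
  induction h with
  | refl => intro _ lit hlit; exact Or.inl hlit
  | @step j k h p ih =>
    intro hk lit hlit
    have hvk := hv.2 k hk
    rcases p with ⟨a, x, hp | hp⟩ | hp
    · -- just k = inl (j, a, x) : j left premise
      rw [ValidLine, hp] at hvk
      obtain ⟨hjk, hak, hxj, hxa, hres⟩ := hvk
      rcases ih (hjk.trans hk) lit hlit with hl | ⟨j', hj', hr', hn'⟩
      · by_cases hx : lit = (x, true)
        · refine Or.inr ⟨a, hak.trans hk,
            Reaches.step (Reaches.refl a) (Or.inl ⟨j, x, Or.inr hp⟩), ?_⟩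
          subst hx; simpa [Lit.negate] using hxa
        · left
          rw [hres]
          exact Finset.mem_union_left _ (Finset.mem_erase.mpr ⟨hx, hl⟩)
      · exact Or.inr ⟨j', hj', hr'.step (Or.inl ⟨a, x, Or.inl hp⟩), hn'⟩
    · -- just k = inl (a, j, x) : j right premise
      rw [ValidLine, hp] at hvk
      obtain ⟨hak, hjk, hxa, hxj, hres⟩ := hvk
      rcases ih (hjk.trans hk) lit hlit with hl | ⟨j', hj', hr', hn'⟩
      · by_cases hx : lit = (x, false)
        · refine Or.inr ⟨a, hak.trans hk,
            Reaches.step (Reaches.refl a) (Or.inl ⟨j, x, Or.inl hp⟩), ?_⟩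
          subst hx; simpa [Lit.negate] using hxa
        · left
          rw [hres]
          exact Finset.mem_union_right _ (Finset.mem_erase.mpr ⟨hx, hl⟩)
      · exact Or.inr ⟨j', hj', hr'.step (Or.inl ⟨a, x, Or.inr hp⟩), hn'⟩
    · rw [ValidLine, hp] at hvk
      exact absurd hvk.1 (by simp)

theorem use_step {Ax : Set (Clause V)} {π : Deriv V} (hv : π.Valid Ax)
    {lit : Lit V} {C : Clause V}
    (hC : π.UsesAxiom C) (hlit : lit ∈ C) (hlast : lit ∉ π.lastClause) :
    ∃ a, π.IsAxiomLine a ∧ lit.negate ∈ π.clause a ∧ π.Reaches a (π.length - 1) := by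
  obtain ⟨i, hax, hcl, hr⟩ := hC
  have hL : π.length - 1 < π.length := Nat.sub_lt hv.1 one_pos
  have hlit' : lit ∈ π.clause i := hcl ▸ hlit
  rcases litSurvives hv hr hL lit hlit' with hl | ⟨j, hjl, hrj, hn⟩
  · exact absurd hl hlast
  · obtain ⟨a, haax, hna, hra⟩ := litToAxiom hv j hjl lit.negate hn
    exact ⟨a, haax, hna, hra.trans' hrj⟩

end Deriv

lemma xl_mem_Xax_pos (l m n i : ℕ) (b : Bool) (h : i ≠ m * l) : xl i true ∈ Xax l m n i b := by
  simp [Xax, h, xl]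

lemma xl_mem_Xax_neg (l m n i : ℕ) (b : Bool) (h : i ≠ 1) : xl (i-1) false ∈ Xax l m n i b := by
  simp [Xax, h, xl]

lemma mem_Xax_inl {l m n i : ℕ} {b : Bool} {q : ℕ} {s : Bool}
    (h : (Sum.inl q, s) ∈ Xax l m n i b) :
    (i ≠ 1 ∧ q = i - 1 ∧ s = false) ∨ (i ≠ m * l ∧ q = i ∧ s = true) := by
  simp only [Xax, Finset.mem_union, Finset.mem_insert, Finset.mem_singleton, xl, wl] at h
  split_ifs at h <;> simp_all [xl, wl, Prod.ext_iff]

lemma not_mem_Wax {l n : ℕ} {C : Clause FV} {q : ℕ} {s : Bool}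
    (hC : C ∈ Waxioms l n) : (Sum.inl q, s) ∉ C := by
  obtain ⟨j, k, b, _, _, _, _, rfl⟩ := hC
  cases b <;> simp [Wax, wl]

/-- a derivation of a W-supported clause that uses an X axiom uses at
least one of the axioms `A_{i,0}`, `A_{i,1}` for every `i ∈ [mℓ]`. -/
theorem stmt1 (l m n : ℕ) (hl : 1 ≤ l) (hm : 1 ≤ m) (hn : 2 ≤ n)
    (π : Deriv FV) (hv : π.Valid (Fformula l m n)) (hW : Wsupported π.lastClause)
    (hX : ∃ i b, 1 ≤ i ∧ i ≤ m * l ∧ π.UsesAxiom (Xax l m n i b)) :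
    ∀ i, 1 ≤ i → i ≤ m * l → ∃ b, π.UsesAxiom (Xax l m n i b) := by
  obtain ⟨i0, b0, hi0, hi0', hu0⟩ := hX
  have hax_form : ∀ a, π.IsAxiomLine a → π.clause a ∈ Fformula l m n := by
    intro a ha
    have := hv.2 a ha.1
    rwa [Deriv.ValidLine, ha.2] at this
  have hWlast : ∀ q s, (Sum.inl q, s) ∉ π.lastClause := by
    intro q s h
    have := hW _ h
    simp at this
  have up : ∀ i b, 1 ≤ i → i < m * l → π.UsesAxiom (Xax l m n i b) →
      ∃ b', π.UsesAxiom (Xax l m n (i+1) b') := by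
    intro i b h1 h2 hu
    have hlit : xl i true ∈ Xax l m n i b := xl_mem_Xax_pos _ _ _ _ _ (by omega)
    obtain ⟨a, haax, hna, hra⟩ := Deriv.use_step hv hu hlit (hWlast i true)
    have hna' : (Sum.inl i, false) ∈ π.clause a := by simpa [Lit.negate, xl] using hna
    rcases hax_form a haax with hw | ⟨i', b', h1', h2', heq⟩
    · exact absurd hna' (not_mem_Wax hw)
    · rw [heq] at hna'
      rcases mem_Xax_inl hna' with ⟨hne, hq, _⟩ | ⟨_, _, hs⟩
      · have hii : i' = i + 1 := by omega
        exact ⟨b', a, haax, by rw [heq, hii], hra⟩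
      · simp at hs
  have down : ∀ i b, 2 ≤ i → i ≤ m * l → π.UsesAxiom (Xax l m n i b) →
      ∃ b', π.UsesAxiom (Xax l m n (i-1) b') := by
    intro i b h1 h2 hu
    have hlit : xl (i-1) false ∈ Xax l m n i b := xl_mem_Xax_neg _ _ _ _ _ (by omega)
    obtain ⟨a, haax, hna, hra⟩ := Deriv.use_step hv hu hlit (hWlast (i-1) false)
    have hna' : (Sum.inl (i-1), true) ∈ π.clause a := by simpa [Lit.negate, xl] using hna
    rcases hax_form a haax with hw | ⟨i', b', h1', h2', heq⟩
    · exact absurd hna' (not_mem_Wax hw)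
    · rw [heq] at hna'
      rcases mem_Xax_inl hna' with ⟨_, _, hs⟩ | ⟨hne, hq, _⟩
      · simp at hs
      · have hii : i' = i - 1 := by omega
        exact ⟨b', a, haax, by rw [heq, hii], hra⟩
  have key : ∀ d, i0 + d ≤ m * l → ∃ b, π.UsesAxiom (Xax l m n (i0 + d) b) := by
    intro d
    induction d with
    | zero => intro _; exact ⟨b0, hu0⟩
    | succ d ih =>
      intro h
      obtain ⟨b, hb⟩ := ih (by omega)
      have := up (i0 + d) b (by omega) (by omega) hb
      exact this
  have key2 : ∀ d, d < i0 → ∃ b, π.UsesAxiom (Xax l m n (i0 - d) b) := by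
    intro d
    induction d with
    | zero => intro _; exact ⟨b0, hu0⟩
    | succ d ih =>
      intro h
      obtain ⟨b, hb⟩ := ih (by omega)
      obtain ⟨b', hb'⟩ := down (i0 - d) b (by omega) (by omega) hb
      have he : i0 - d - 1 = i0 - (d + 1) := by omega
      rw [he] at hb'
      exact ⟨b', hb'⟩
  intro i h1 h2
  by_cases hc : i0 ≤ i
  · have := key (i - i0) (by omega)
    rwa [Nat.add_sub_cancel' hc] at this
  · have := key2 (i0 - i) (by omega)
    have he : i0 - (i0 - i) = i := by omega
    rwa [he] at this
end

section
/- If there is a tree-like resolution derivation of a clause C of length L in which at most the root (final clause) is a merge, then there is an input resolution derivation from the same set of axioms of some clause C' ⊆ C of length at most L. -/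
open Finset

/-!
Given an input derivation of `D ∋ x` and a line with clause `E ∋ ¬x` none of whose ancestors is
a merge, the subproof of that line can be absorbed into the input derivation, which then ends in
a subclause of `(D - x) ∨ (E - ¬x)`. An axiom `E` costs one input step. If `E` is the resolvent of
`E₁ ∨ y` and `E₂ ∨ ¬y` with `¬x ∈ E₁`, absorb `E₁` on `x` and then `E₂` on `y`; as the step
producing `E` is not a merge, `¬x ∉ E₂`, so `¬x` does not reappear. A step whose pivot literal is
already gone is skipped, which only shrinks the clause.

Absorbing a subproof with `s` lines adds at most `s + 1` lines. In a tree-like derivation the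
ancestors of the two premises of a step are disjoint, so counting ancestors bounds the result: at
the root, whose step may be a merge, absorb the subproof of one premise into the input derivation
of the other and obtain at most as many lines as the root has ancestors.
-/

lemma Finset.erase_union_erase_subset {α : Type*} [DecidableEq α] {C U W : Finset α}
    {p q r s : α} (h : p ∉ W.erase s) :
    (C.erase q ∪ U.erase p).erase r ∪ W.erase s ⊆ C.erase q ∪ (U.erase r ∪ W.erase s).erase p := by
  intro l
  simp only [mem_union, mem_erase] at h ⊢
  grind

namespace Deriv

variable {V : Type}

section

variable {π : Deriv V}

lemma just_eq_none_of_length_le {k : ℕ} (hk : π.length ≤ k) : π.just k = none := by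
  rw [just, List.getD_eq_default _ _ hk]

lemma lt_length_of_mem_clause {k : ℕ} {l : Lit V} (h : l ∈ π.clause k) : k < π.length := by
  by_contra! hk
  rw [clause, List.getD_eq_default _ _ hk] at h
  exact notMem_empty l h

lemma lt_length_of_just_eq_some {k : ℕ} {J : Just V} (h : π.just k = some J) :
    k < π.length := by
  by_contra! hk
  rw [just_eq_none_of_length_le hk] at h
  cases h

lemma clause_append_of_lt (l : List (Clause V × Option (Just V))) {k : ℕ}
    (hk : k < π.length) : (⟨π.lines ++ l⟩ : Deriv V).clause k = π.clause k := by
  rw [clause, clause, List.getD_append _ _ _ _ hk]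

lemma just_append_of_lt (l : List (Clause V × Option (Just V))) {k : ℕ}
    (hk : k < π.length) : (⟨π.lines ++ l⟩ : Deriv V).just k = π.just k := by
  rw [just, just, List.getD_append _ _ _ _ hk]

lemma Reaches.eq_or_exists_isParent {a b : ℕ} (h : π.Reaches a b) :
    a = b ∨ ∃ c, π.IsParent a c ∧ π.Reaches c b := by
  induction h with
  | refl => exact Or.inl rfl
  | step _ hp ih =>
    rcases ih with rfl | ⟨c, hc, hcb⟩
    · exact Or.inr ⟨_, hp, .refl _⟩
    · exact Or.inr ⟨c, hc, .step hcb hp⟩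

lemma TreeLike.reaches_total (ht : π.TreeLike) {m i j : ℕ} (hi : π.Reaches m i)
    (hj : π.Reaches m j) : π.Reaches i j ∨ π.Reaches j i := by
  induction hj with
  | refl => exact Or.inr hi
  | step _ hp ih =>
    rcases ih with hij | hji
    · exact Or.inl (.step hij hp)
    · rcases hji.eq_or_exists_isParent with rfl | ⟨c, hc, hci⟩
      · exact Or.inl (.step (.refl _) hp)
      · exact Or.inr (ht _ _ _ hc hp ▸ hci)

open Classical in
noncomputable def ancestors (π : Deriv V) (k : ℕ) : Finset ℕ :=
  {m ∈ range (k + 1) | π.Reaches m k}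

lemma mem_ancestors {m k : ℕ} : m ∈ π.ancestors k ↔ m ≤ k ∧ π.Reaches m k := by
  simp [ancestors]

lemma self_mem_ancestors (k : ℕ) : k ∈ π.ancestors k :=
  mem_ancestors.2 ⟨le_rfl, .refl k⟩

lemma card_ancestors_le (k : ℕ) : (π.ancestors k).card ≤ k + 1 := by
  simpa using card_le_card fun m hm => mem_range_succ_iff.2 (mem_ancestors.1 hm).1

lemma ancestors_subset_of_isParent {i k : ℕ} (h : π.IsParent i k) (hik : i ≤ k) :
    π.ancestors i ⊆ π.ancestors k := fun _ hm =>
  have hm := mem_ancestors.1 hm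
  mem_ancestors.2 ⟨hm.1.trans hik, .step hm.2 h⟩

end

variable [DecidableEq V] {Ax : Set (Clause V)} {π : Deriv V}

lemma resolve_self (A : Clause V) (x : V) : resolve A A x = A := by
  ext l
  simp only [resolve, mem_union, mem_erase]
  grind

namespace Valid

lemma clause_mem_of_just_eq_none (hv : π.Valid Ax) {k : ℕ} (hk : k < π.length)
    (h : π.just k = none) : π.clause k ∈ Ax := by
  simpa [ValidLine, h] using hv.2 k hk

lemma of_just_eq_inl (hv : π.Valid Ax) {k i j : ℕ} {x : V}
    (h : π.just k = some (.inl (i, j, x))) :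
    i < k ∧ j < k ∧ (x, true) ∈ π.clause i ∧ (x, false) ∈ π.clause j ∧
      π.clause k = resolve (π.clause i) (π.clause j) x := by
  simpa [ValidLine, h] using hv.2 k (lt_length_of_just_eq_some h)

lemma just_ne_inr (hv : π.Valid Ax) (k i : ℕ) : π.just k ≠ some (.inr i) := by
  intro h
  simpa [ValidLine, h] using hv.2 k (lt_length_of_just_eq_some h)

lemma lt_of_isParent (hv : π.Valid Ax) {i k : ℕ} (h : π.IsParent i k) : i < k := by
  rcases h with ⟨j, x, h | h⟩ | h
  · exact (hv.of_just_eq_inl h).1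
  · exact (hv.of_just_eq_inl h).2.1
  · exact absurd h (hv.just_ne_inr k i)

lemma le_of_reaches (hv : π.Valid Ax) {i k : ℕ} (h : π.Reaches i k) : i ≤ k := by
  induction h with
  | refl => exact le_rfl
  | step _ hp ih => exact ih.trans (hv.lt_of_isParent hp).le

end Valid

lemma TreeLike.not_reaches_of_isParent (hv : π.Valid Ax) (ht : π.TreeLike) {i j k : ℕ}
    (hik : π.IsParent i k) (hjk : j < k) (hij : i ≠ j) : ¬ π.Reaches i j := by
  intro h
  rcases h.eq_or_exists_isParent with rfl | ⟨c, hc, hcj⟩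
  · exact hij rfl
  · have := hv.le_of_reaches (ht _ _ _ hc hik ▸ hcj)
    omega

lemma TreeLike.card_ancestors_add_le (hv : π.Valid Ax) (ht : π.TreeLike) {k i j : ℕ} {x : V}
    (h : π.just k = some (.inl (i, j, x))) (hij : i ≠ j) :
    (π.ancestors i).card + (π.ancestors j).card + 1 ≤ (π.ancestors k).card := by
  obtain ⟨hik, hjk, -⟩ := hv.of_just_eq_inl h
  have hpi : π.IsParent i k := .inl ⟨j, x, .inl h⟩
  have hpj : π.IsParent j k := .inl ⟨i, x, .inr h⟩
  have hdisj : Disjoint (π.ancestors i) (π.ancestors j) := by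
    refine disjoint_left.2 fun m hmi hmj => ?_
    rcases ht.reaches_total (mem_ancestors.1 hmi).2 (mem_ancestors.1 hmj).2 with h' | h'
    · exact ht.not_reaches_of_isParent hv hpi hjk hij h'
    · exact ht.not_reaches_of_isParent hv hpj hik (Ne.symm hij) h'
  have hk : k ∉ π.ancestors i ∪ π.ancestors j := by
    simp only [mem_union, mem_ancestors]
    omega
  calc (π.ancestors i).card + (π.ancestors j).card + 1
      = (insert k (π.ancestors i ∪ π.ancestors j)).card := by
        rw [card_insert_of_notMem hk, card_union_of_disjoint hdisj]
    _ ≤ (π.ancestors k).card := by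
        refine card_le_card (insert_subset (self_mem_ancestors k) (union_subset ?_ ?_))
        · exact ancestors_subset_of_isParent hpi hik.le
        · exact ancestors_subset_of_isParent hpj hjk.le

lemma ValidLine.append {w : Bool} {k : ℕ} (l : List (Clause V × Option (Just V)))
    (h : π.ValidLine Ax w k) (hk : k < π.length) : ValidLine Ax w ⟨π.lines ++ l⟩ k := by
  have hcl {i : ℕ} (hik : i < k) := clause_append_of_lt l (hik.trans hk)
  unfold ValidLine at h ⊢
  rw [just_append_of_lt l hk, clause_append_of_lt l hk]
  rcases hj : π.just k with _ | ⟨⟨i, j, x⟩⟩ | i <;> simp only [hj] at h ⊢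
  · exact h
  · obtain ⟨hik, hjk, h⟩ := h
    rw [hcl hik, hcl hjk]
    exact ⟨hik, hjk, h⟩
  · obtain ⟨hw, hik, h⟩ := h
    rw [hcl hik]
    exact ⟨hw, hik, h⟩

-- `b` is the sign of the pivot in the last clause; the premise containing `(x, true)` is listed
-- first.
def resolveWithAxiom (π : Deriv V) (B : Clause V) (x : V) (b : Bool) : Deriv V :=
  ⟨π.lines ++ [(B, none), (π.lastClause.erase (x, b) ∪ B.erase (x, !b),
    some (.inl (cond b (π.length - 1, π.length, x) (π.length, π.length - 1, x))))]⟩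

section resolveWithAxiom

variable {B : Clause V} {x : V} {b : Bool}

@[simp]
lemma length_resolveWithAxiom : (π.resolveWithAxiom B x b).length = π.length + 2 := by
  simp [resolveWithAxiom, length]

lemma clause_resolveWithAxiom_length : (π.resolveWithAxiom B x b).clause π.length = B := by
  simp [resolveWithAxiom, clause, length]

lemma just_resolveWithAxiom_of_lt {k : ℕ} (hk : k < π.length) :
    (π.resolveWithAxiom B x b).just k = π.just k :=
  just_append_of_lt _ hk

lemma just_resolveWithAxiom_length : (π.resolveWithAxiom B x b).just π.length = none := by
  simp [resolveWithAxiom, just, length]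

lemma clause_resolveWithAxiom_last : (π.resolveWithAxiom B x b).clause (π.length + 1) =
    π.lastClause.erase (x, b) ∪ B.erase (x, !b) := by
  simp [resolveWithAxiom, clause, length]

lemma lastClause_resolveWithAxiom :
    (π.resolveWithAxiom B x b).lastClause = π.lastClause.erase (x, b) ∪ B.erase (x, !b) := by
  simp [lastClause, clause_resolveWithAxiom_last]

lemma just_resolveWithAxiom_last : (π.resolveWithAxiom B x b).just (π.length + 1) =
    some (.inl (cond b (π.length - 1, π.length, x) (π.length, π.length - 1, x))) := by
  simp [resolveWithAxiom, just, length]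

lemma Valid.resolveWithAxiom (hv : π.Valid Ax) (hB : B ∈ Ax) (hxπ : (x, b) ∈ π.lastClause)
    (hxB : (x, !b) ∈ B) : (π.resolveWithAxiom B x b).Valid Ax := by
  refine ⟨by simp, fun k hk => ?_⟩
  rw [length_resolveWithAxiom] at hk
  obtain hk | rfl | rfl : k < π.length ∨ k = π.length ∨ k = π.length + 1 := by omega
  · exact (hv.2 k hk).append _ hk
  · rw [ValidLine, just_resolveWithAxiom_length, clause_resolveWithAxiom_length]
    exact hB
  · have hlast : (π.resolveWithAxiom B x b).clause (π.length - 1) = π.lastClause :=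
      clause_append_of_lt _ (Nat.sub_one_lt_of_lt hv.1)
    rw [ValidLine, just_resolveWithAxiom_last, clause_resolveWithAxiom_last]
    cases b
    · simp only [cond_false]
      rw [clause_resolveWithAxiom_length, hlast, resolve, union_comm]
      exact ⟨by omega, by omega, hxB, hxπ, rfl⟩
    · simp only [cond_true]
      rw [clause_resolveWithAxiom_length, hlast]
      exact ⟨by omega, by omega, hxπ, hxB, rfl⟩

lemma Input.resolveWithAxiom (hv : π.Valid Ax) (hi : π.Input) :
    (π.resolveWithAxiom B x b).Input := by
  intro k i j y h
  obtain hk | rfl | rfl | hk :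
      k < π.length ∨ k = π.length ∨ k = π.length + 1 ∨ π.length + 2 ≤ k := by omega
  · rw [just_resolveWithAxiom_of_lt hk] at h
    obtain ⟨hik, hjk, -⟩ := hv.of_just_eq_inl h
    rw [just_resolveWithAxiom_of_lt (hik.trans hk), just_resolveWithAxiom_of_lt (hjk.trans hk)]
    exact hi k i j y h
  · simp [just_resolveWithAxiom_length] at h
  · rw [just_resolveWithAxiom_last] at h
    cases b <;> simp only [cond_false, cond_true, Option.some.injEq, Sum.inl.injEq,
      Prod.mk.injEq] at h <;> obtain ⟨rfl, rfl, -⟩ := h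
    · exact .inl just_resolveWithAxiom_length
    · exact .inr just_resolveWithAxiom_length
  · rw [just_eq_none_of_length_le (by simpa using hk)] at h
    cases h

end resolveWithAxiom

def InputDerivesSubclause (Ax : Set (Clause V)) (C : Clause V) (n : ℕ) : Prop :=
  ∃ π : Deriv V, π.Valid Ax ∧ π.Input ∧ π.lastClause ⊆ C ∧ π.length ≤ n

namespace InputDerivesSubclause

variable {B C D : Clause V} {n m : ℕ}

lemma mono (h : InputDerivesSubclause Ax C n) (hCD : C ⊆ D) (hnm : n ≤ m) :
    InputDerivesSubclause Ax D m :=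
  let ⟨π, hv, hi, hC, hn⟩ := h
  ⟨π, hv, hi, hC.trans hCD, hn.trans hnm⟩

lemma of_mem (hC : C ∈ Ax) : InputDerivesSubclause Ax C 1 := by
  refine ⟨⟨[(C, none)]⟩, ⟨by simp [length], fun k hk => ?_⟩, fun k i j x h => ?_, le_rfl, le_rfl⟩
  · obtain rfl : k = 0 := by simpa [length] using hk
    exact hC
  · rcases k with _ | k <;> simp [just] at h

lemma resolve_axiom {x : V} {b : Bool} (h : InputDerivesSubclause Ax C n) (hB : B ∈ Ax)
    (hxB : (x, !b) ∈ B) : InputDerivesSubclause Ax (C.erase (x, b) ∪ B.erase (x, !b)) (n + 2) := by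
  obtain ⟨π, hv, hi, hC, hn⟩ := h
  by_cases hx : (x, b) ∈ π.lastClause
  · refine ⟨π.resolveWithAxiom B x b, hv.resolveWithAxiom hB hx hxB, hi.resolveWithAxiom hv,
      ?_, by simpa⟩
    rw [lastClause_resolveWithAxiom]
    exact union_subset_union (erase_subset_erase _ hC) le_rfl
  · refine ⟨π, hv, hi, fun l hl => mem_union_left _ (mem_erase.2 ⟨?_, hC hl⟩), by omega⟩
    rintro rfl
    exact hx hl

end InputDerivesSubclause

theorem InputDerivesSubclause.resolve_clause (hv : π.Valid Ax) (ht : π.TreeLike) {k : ℕ}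
    (hm : ∀ m ≤ k, ¬ π.IsMergeLine m) {x : V} {b : Bool} {C : Clause V} {n : ℕ}
    (hx : (x, !b) ∈ π.clause k) (h : InputDerivesSubclause Ax C n) :
    InputDerivesSubclause Ax (C.erase (x, b) ∪ (π.clause k).erase (x, !b))
      (n + (π.ancestors k).card + 1) := by
  induction k using Nat.strong_induction_on generalizing x b C n with
  | _ k ih =>
  rcases hj : π.just k with _ | ⟨⟨i, j, y⟩⟩ | i
  · refine (h.resolve_axiom (hv.clause_mem_of_just_eq_none (lt_length_of_mem_clause hx) hj)
      hx).mono le_rfl ?_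
    have := card_pos.2 ⟨k, self_mem_ancestors (π := π) k⟩
    omega
  · obtain ⟨hik, hjk, hyi, hyj, hck⟩ := hv.of_just_eq_inl hj
    have hmi : ∀ m ≤ i, ¬ π.IsMergeLine m := fun m hm' => hm m (hm'.trans hik.le)
    have hmj : ∀ m ≤ j, ¬ π.IsMergeLine m := fun m hm' => hm m (hm'.trans hjk.le)
    rw [hck] at hx ⊢
    by_cases hij : i = j
    · subst hij
      rw [resolve_self] at hx ⊢
      refine (ih i hik hmi hx h).mono le_rfl ?_
      have := card_le_card (ancestors_subset_of_isParent (.inl ⟨i, y, .inl hj⟩) hik.le)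
      omega
    · have hcard := ht.card_ancestors_add_le hv hj hij
      have hdisj : ∀ l ∈ (π.clause i).erase (y, true), l ∉ (π.clause j).erase (y, false) :=
        fun l hli hlj => hm k le_rfl ⟨i, j, y, hj, l, hli, hlj⟩
      rcases mem_union.1 hx with hxi | hxj
      · have h₁ := ih i hik hmi (mem_of_mem_erase hxi) h
        have h₂ := ih j hjk hmj (b := true) hyj h₁
        exact h₂.mono (erase_union_erase_subset (hdisj _ hxi)) (by omega)
      · have h₁ := ih j hjk hmj (mem_of_mem_erase hxj) h
        have h₂ := ih i hik hmi (b := false) hyi h₁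
        rw [resolve, union_comm ((π.clause i).erase _)]
        exact h₂.mono (erase_union_erase_subset fun hxi => hdisj _ hxi hxj) (by omega)
  · exact absurd hj (hv.just_ne_inr k i)

theorem inputDerivesSubclause_clause (hv : π.Valid Ax) (ht : π.TreeLike) {k : ℕ}
    (hk : k < π.length) (hm : ∀ m < k, ¬ π.IsMergeLine m) :
    InputDerivesSubclause Ax (π.clause k) (π.ancestors k).card := by
  induction k using Nat.strong_induction_on with
  | _ k ih =>
  rcases hj : π.just k with _ | ⟨⟨i, j, x⟩⟩ | i
  · exact (InputDerivesSubclause.of_mem (hv.clause_mem_of_just_eq_none hk hj)).mono le_rfl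
      (card_pos.2 ⟨k, self_mem_ancestors k⟩)
  · obtain ⟨hik, hjk, -, hxj, hck⟩ := hv.of_just_eq_inl hj
    have hi := ih i hik (hik.trans hk) fun m hm' => hm m (hm'.trans hik)
    rw [hck]
    by_cases hij : i = j
    · subst hij
      rw [resolve_self]
      exact hi.mono le_rfl
        (card_le_card (ancestors_subset_of_isParent (.inl ⟨i, x, .inl hj⟩) hik.le))
    · have hj' := hi.resolve_clause hv ht (fun m hm' => hm m (hm'.trans_lt hjk)) (b := true) hxj
      exact hj'.mono le_rfl (ht.card_ancestors_add_le hv hj hij)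
  · exact absurd hj (hv.just_ne_inr k i)

end Deriv

/-- a tree-like derivation of `C` of length `L` where at most the root
is a merge can be turned into an input derivation of some `C' ⊆ C` of length ≤ `L`
from the same axioms. -/
theorem stmt3 {V : Type} [DecidableEq V] (Ax : Set (Clause V)) (π : Deriv V)
    (C : Clause V) (L : ℕ) (hv : π.Valid Ax) (ht : π.TreeLike)
    (hm : ∀ k, π.IsMergeLine k → k = π.length - 1)
    (hC : π.lastClause = C) (hL : π.length = L) :
    ∃ C' ⊆ C, ∃ π' : Deriv V, π'.Valid Ax ∧ π'.Input ∧ π'.lastClause = C' ∧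
      π'.length ≤ L := by
  subst hC hL
  have hroot : π.length - 1 < π.length := Nat.sub_one_lt_of_lt hv.1
  obtain ⟨π', hv', hi', hsub, hlen⟩ := Deriv.inputDerivesSubclause_clause hv ht hroot
    fun m hm' hmerge => hm'.ne (hm m hmerge)
  refine ⟨π'.lastClause, hsub, π', hv', hi', rfl, hlen.trans ?_⟩
  have := Deriv.card_ancestors_le (π := π) (π.length - 1)
  omega
end

section
/- A tree-like merge resolution derivation can be decomposed into an input-structured sequence of input resolution derivations in which every lemma (last clause of each derivation except the final one) is a merge. -/
open Finset

/-- every resolution step has a premise that is an axiom or a merge -/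
def Deriv.MergeRes {V : Type} [DecidableEq V] (π : Deriv V) : Prop :=
  ∀ k i j x, π.just k = some (Sum.inl (i, j, x)) →
    (π.just i = none ∨ π.IsMergeLine i) ∨ (π.just j = none ∨ π.IsMergeLine j)

set_option linter.unusedSectionVars false

section Stmt5Aux

variable {V : Type} [DecidableEq V]

theorem validLine_mono {Ax Ax' : Set (Clause V)} (h : Ax ⊆ Ax') {w : Bool} {π : Deriv V} {k : ℕ}
    (hl : Deriv.ValidLine Ax w π k) : Deriv.ValidLine Ax' w π k := by
  cases hj : π.just k with
  | none => simp only [Deriv.ValidLine, hj] at hl ⊢; exact h hl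
  | some v =>
    rcases v with ⟨i, j, x⟩ | i <;> simp only [Deriv.ValidLine, hj] at hl ⊢ <;> exact hl

theorem valid_mono {Ax Ax' : Set (Clause V)} (h : Ax ⊆ Ax') {π : Deriv V}
    (hv : π.Valid Ax) : π.Valid Ax' :=
  ⟨hv.1, fun k hk => validLine_mono h (hv.2 k hk)⟩

theorem seqGet_append_left {P Q : List (Deriv V)} {t : ℕ} (h : t < P.length) :
    seqGet (P ++ Q) t = seqGet P t := List.getD_append _ _ _ _ h

theorem seqGet_append_right {P Q : List (Deriv V)} {t : ℕ} (h : P.length ≤ t) :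
    seqGet (P ++ Q) t = seqGet Q (t - P.length) := List.getD_append_right _ _ _ _ h

def PreLem (S : List (Deriv V)) (t : ℕ) : Set (Clause V) :=
  {C | ∃ t' < t, C = (seqGet S t').lastClause}

def LemSet (S : List (Deriv V)) : Set (Clause V) := PreLem S S.length

theorem preLem_append_left {P Q : List (Deriv V)} {t : ℕ} (h : t ≤ P.length) :
    PreLem (P ++ Q) t = PreLem P t := by
  ext C
  constructor
  · rintro ⟨t', ht', rfl⟩
    exact ⟨t', ht', congrArg _ (seqGet_append_left (lt_of_lt_of_le ht' h))⟩
  · rintro ⟨t', ht', rfl⟩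
    exact ⟨t', ht', (congrArg _ (seqGet_append_left (lt_of_lt_of_le ht' h))).symm⟩

theorem lemSet_left {P Q : List (Deriv V)} : LemSet P ⊆ LemSet (P ++ Q) := by
  rintro C ⟨t, ht, rfl⟩
  exact ⟨t, by rw [List.length_append]; omega, (congrArg _ (seqGet_append_left ht)).symm⟩

theorem lemSet_right {P Q : List (Deriv V)} : LemSet Q ⊆ LemSet (P ++ Q) := by
  rintro C ⟨t, ht, rfl⟩
  refine ⟨P.length + t, by rw [List.length_append]; omega, ?_⟩
  rw [seqGet_append_right (by omega), Nat.add_sub_cancel_left]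

def PGood (Ax : Set (Clause V)) (P : List (Deriv V)) : Prop :=
  ∀ t < P.length,
    (seqGet P t).Valid (Ax ∪ PreLem P t) ∧ (seqGet P t).Input ∧
      (seqGet P t).IsMergeLine ((seqGet P t).length - 1)

theorem pgood_mono {Ax Ax' : Set (Clause V)} (h : Ax ⊆ Ax') {P : List (Deriv V)}
    (hP : PGood Ax P) : PGood Ax' P :=
  fun t ht => ⟨valid_mono (Set.union_subset_union_left _ h) (hP t ht).1,
    (hP t ht).2.1, (hP t ht).2.2⟩

theorem pgood_append {Ax : Set (Clause V)} {P Q : List (Deriv V)}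
    (hP : PGood Ax P) (hQ : PGood (Ax ∪ LemSet P) Q) : PGood Ax (P ++ Q) := by
  intro t ht
  rw [List.length_append] at ht
  by_cases h : t < P.length
  · rw [seqGet_append_left h]
    obtain ⟨v, i, m⟩ := hP t h
    refine ⟨valid_mono ?_ v, i, m⟩
    rw [preLem_append_left (le_of_lt h)]
  · push_neg at h
    rw [seqGet_append_right h]
    obtain ⟨v, i, m⟩ := hQ (t - P.length) (by omega)
    refine ⟨valid_mono ?_ v, i, m⟩
    intro C hC
    rcases hC with (hC | hC) | hC
    · exact Or.inl hC
    · obtain ⟨t', ht', rfl⟩ := hC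
      exact Or.inr ⟨t', by omega, (congrArg _ (seqGet_append_left ht')).symm⟩
    · obtain ⟨t', ht', rfl⟩ := hC
      refine Or.inr ⟨P.length + t', by omega, ?_⟩
      rw [seqGet_append_right (by omega), Nat.add_sub_cancel_left]

theorem pgood_single {Ax : Set (Clause V)} {D : Deriv V} (hv : D.Valid Ax) (hin : D.Input)
    (hm : D.IsMergeLine (D.length - 1)) : PGood Ax [D] := by
  intro t ht
  simp only [List.length_singleton] at ht
  interval_cases t
  exact ⟨valid_mono Set.subset_union_left hv, hin, hm⟩

end Stmt5Aux
section Stmt5Aux2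

variable {V : Type} [DecidableEq V]

theorem ext_clause_lt (D : Deriv V) (E : List (Clause V × Option (Just V))) {m : ℕ}
    (h : m < D.length) : (Deriv.mk (D.lines ++ E)).clause m = D.clause m := by
  simp only [Deriv.clause]
  rw [List.getD_append _ _ _ _ h]

theorem ext_just_lt (D : Deriv V) (E : List (Clause V × Option (Just V))) {m : ℕ}
    (h : m < D.length) : (Deriv.mk (D.lines ++ E)).just m = D.just m := by
  simp only [Deriv.just]
  rw [List.getD_append _ _ _ _ h]

theorem ext_clause_ge (D : Deriv V) (E : List (Clause V × Option (Just V))) {m : ℕ}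
    (h : D.length ≤ m) :
    (Deriv.mk (D.lines ++ E)).clause m = (E.getD (m - D.length) (∅, none)).1 := by
  simp only [Deriv.clause]
  rw [List.getD_append_right _ _ _ _ h]
  rfl

theorem ext_just_ge (D : Deriv V) (E : List (Clause V × Option (Just V))) {m : ℕ}
    (h : D.length ≤ m) :
    (Deriv.mk (D.lines ++ E)).just m = (E.getD (m - D.length) (∅, none)).2 := by
  simp only [Deriv.just]
  rw [List.getD_append_right _ _ _ _ h]
  rfl

theorem ext_length (D : Deriv V) (E : List (Clause V × Option (Just V))) :
    (Deriv.mk (D.lines ++ E)).length = D.length + E.length := by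
  simp [Deriv.length]

theorem validLine_ext {Ax : Set (Clause V)} {w : Bool} {D : Deriv V}
    (E : List (Clause V × Option (Just V))) {k : ℕ} (hk : k < D.length)
    (h : Deriv.ValidLine Ax w D k) :
    Deriv.ValidLine Ax w (Deriv.mk (D.lines ++ E)) k := by
  have hjk := ext_just_lt D E hk
  cases hj : D.just k with
  | none =>
    simp only [Deriv.ValidLine, hj] at h
    simp only [Deriv.ValidLine, hjk, hj]
    rw [ext_clause_lt D E hk]
    exact h
  | some v =>
    rcases v with ⟨i, j, x⟩ | i
    · simp only [Deriv.ValidLine, hj] at h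
      obtain ⟨hi, hj', h1, h2, h3⟩ := h
      simp only [Deriv.ValidLine, hjk, hj]
      rw [ext_clause_lt D E hk, ext_clause_lt D E (hi.trans hk), ext_clause_lt D E (hj'.trans hk)]
      exact ⟨hi, hj', h1, h2, h3⟩
    · simp only [Deriv.ValidLine, hj] at h
      obtain ⟨hw, hi, hsub⟩ := h
      simp only [Deriv.ValidLine, hjk, hj]
      rw [ext_clause_lt D E hk, ext_clause_lt D E (hi.trans hk)]
      exact ⟨hw, hi, hsub⟩

theorem assemble {Ax : Set (Clause V)} {Pb P : List (Deriv V)} {D : Deriv V}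
    {B R CL CR : Clause V} {x : V} {pL pR : ℕ}
    (hPb : PGood Ax Pb) (hP : PGood Ax P)
    (hD : D.Valid (Ax ∪ LemSet P)) (hin : D.Input)
    (hB : B ∈ Ax ∪ LemSet Pb)
    (hpos : (pL = D.length - 1 ∧ pR = D.length ∧ D.lastClause = CL ∧ B = CR) ∨
            (pL = D.length ∧ pR = D.length - 1 ∧ D.lastClause = CR ∧ B = CL))
    (hxt : (x, true) ∈ CL) (hxf : (x, false) ∈ CR)
    (hR : R = Deriv.resolve CL CR x) :
    PGood Ax (Pb ++ P) ∧
    (Deriv.mk (D.lines ++ [(B, none), (R, some (Sum.inl (pL, pR, x)))])).Valid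
      (Ax ∪ LemSet (Pb ++ P)) ∧
    (Deriv.mk (D.lines ++ [(B, none), (R, some (Sum.inl (pL, pR, x)))])).Input ∧
    (Deriv.mk (D.lines ++ [(B, none), (R, some (Sum.inl (pL, pR, x)))])).lastClause = R ∧
    ((∃ l, l ∈ CL.erase (x, true) ∧ l ∈ CR.erase (x, false)) →
      (Deriv.mk (D.lines ++ [(B, none), (R, some (Sum.inl (pL, pR, x)))])).IsMergeLine
        ((Deriv.mk (D.lines ++ [(B, none), (R, some (Sum.inl (pL, pR, x)))])).length - 1)) := by
  set E : List (Clause V × Option (Just V)) := [(B, none), (R, some (Sum.inl (pL, pR, x)))] with hE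
  set D' : Deriv V := Deriv.mk (D.lines ++ E) with hD'
  set n := D.length with hn
  have hn0 : 0 < n := hD.1
  have hlen : D'.length = n + 2 := by rw [hD', ext_length]; rfl
  have hcn : D'.clause n = B := by rw [hD', ext_clause_ge D E le_rfl]; simp [hE]
  have hjn : D'.just n = none := by rw [hD', ext_just_ge D E le_rfl]; simp [hE]
  have hcn1 : D'.clause (n + 1) = R := by
    rw [hD', ext_clause_ge D E (by omega)]
    have : n + 1 - n = 1 := by omega
    rw [this]; simp [hE]
  have hjn1 : D'.just (n + 1) = some (Sum.inl (pL, pR, x)) := by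
    rw [hD', ext_just_ge D E (by omega)]
    have : n + 1 - n = 1 := by omega
    rw [this]; simp [hE]
  have hjge : ∀ m, n + 2 ≤ m → D'.just m = none := by
    intro m hm
    rw [hD', ext_just_ge D E (by omega)]
    rw [List.getD_eq_default]
    simp [hE]; omega
  have hclast : D'.clause (n - 1) = D.lastClause := by
    rw [hD', ext_clause_lt D E (by omega)]; rfl
  have hcpL : D'.clause pL = CL := by
    rcases hpos with ⟨h1, h2, h3, h4⟩ | ⟨h1, h2, h3, h4⟩
    · rw [h1, hclast, h3]
    · rw [h1, hcn, h4]
  have hcpR : D'.clause pR = CR := by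
    rcases hpos with ⟨h1, h2, h3, h4⟩ | ⟨h1, h2, h3, h4⟩
    · rw [h2, hcn, h4]
    · rw [h2, hclast, h3]
  have hsB : Ax ∪ LemSet Pb ⊆ Ax ∪ LemSet (Pb ++ P) :=
    Set.union_subset_union_right _ lemSet_left
  have hsP : Ax ∪ LemSet P ⊆ Ax ∪ LemSet (Pb ++ P) :=
    Set.union_subset_union_right _ lemSet_right
  have hpgood : PGood Ax (Pb ++ P) :=
    pgood_append hPb (pgood_mono Set.subset_union_left hP)
  have hpLlt : pL < n + 1 := by rcases hpos with ⟨h1, _⟩ | ⟨h1, _⟩ <;> omega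
  have hpRlt : pR < n + 1 := by rcases hpos with ⟨_, h2, _⟩ | ⟨_, h2, _⟩ <;> omega
  refine ⟨hpgood, ⟨by omega, ?_⟩, ?_, ?_, ?_⟩
  · -- validity of each line of D'
    intro m hm
    rw [hlen] at hm
    rcases Nat.lt_or_ge m n with h | h
    · exact validLine_ext E h (validLine_mono hsP (hD.2 m h))
    · have : m = n ∨ m = n + 1 := by omega
      rcases this with rfl | rfl
      · simp only [Deriv.ValidLine, hjn, hcn]
        exact hsB hB
      · simp only [Deriv.ValidLine, hjn1, hcpL, hcpR, hcn1]
        exact ⟨hpLlt, hpRlt, hxt, hxf, hR⟩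
  · -- Input
    intro k i j y hk
    rcases Nat.lt_or_ge k n with h | h
    · rw [hD', ext_just_lt D E h] at hk
      have hval := hD.2 k h
      simp only [Deriv.ValidLine, hk] at hval
      obtain ⟨hik, hjk, -⟩ := hval
      rcases hin k i j y hk with h' | h'
      · left; rw [hD', ext_just_lt D E (hik.trans h)]; exact h'
      · right; rw [hD', ext_just_lt D E (hjk.trans h)]; exact h'
    · have : k = n ∨ k = n + 1 ∨ n + 2 ≤ k := by omega
      rcases this with rfl | rfl | hk2
      · rw [hjn] at hk; cases hk
      · rw [hjn1] at hk
        simp only [Option.some.injEq, Sum.inl.injEq, Prod.mk.injEq] at hk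
        obtain ⟨rfl, rfl, rfl⟩ := hk
        rcases hpos with ⟨h1, h2, -⟩ | ⟨h1, h2, -⟩
        · right; rw [h2]; exact hjn
        · left; rw [h1]; exact hjn
      · rw [hjge k hk2] at hk; cases hk
  · -- lastClause
    show D'.clause (D'.length - 1) = R
    rw [hlen]
    have : n + 2 - 1 = n + 1 := by omega
    rw [this]; exact hcn1
  · -- merge
    rintro ⟨l, hl1, hl2⟩
    rw [hlen]
    have : n + 2 - 1 = n + 1 := by omega
    rw [this]
    exact ⟨pL, pR, x, hjn1, l, by rw [hcpL]; exact hl1, by rw [hcpR]; exact hl2⟩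

end Stmt5Aux2
section Stmt5Aux3

variable {V : Type} [DecidableEq V]

def isMergeB (π : Deriv V) (i : ℕ) : Bool :=
  match π.just i with
  | some (Sum.inl (a, b, x)) =>
      decide (((π.clause a).erase (x, true) ∩ (π.clause b).erase (x, false)).Nonempty)
  | _ => false

theorem isMergeB_iff {π : Deriv V} {i : ℕ} : isMergeB π i = true ↔ π.IsMergeLine i := by
  cases hj : π.just i with
  | none =>
    simp only [isMergeB, hj, Deriv.IsMergeLine]
    simp [hj]
  | some v =>
    rcases v with ⟨a, b, x⟩ | m
    · simp only [isMergeB, hj, Deriv.IsMergeLine, decide_eq_true_eq]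
      constructor
      · rintro ⟨l, hl⟩
        rw [Finset.mem_inter] at hl
        exact ⟨a, b, x, rfl, l, hl.1, hl.2⟩
      · rintro ⟨a', b', x', he, l, h1, h2⟩
        simp only [Option.some.injEq, Sum.inl.injEq, Prod.mk.injEq] at he
        obtain ⟨rfl, rfl, rfl⟩ := he
        exact ⟨l, Finset.mem_inter.2 ⟨h1, h2⟩⟩
    · simp only [isMergeB, hj, Deriv.IsMergeLine]
      simp [hj]

def build (π : Deriv V) : ℕ → ℕ → List (Deriv V) × Deriv V
  | 0, _ => ([], ⟨[(∅, none)]⟩)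
  | f + 1, k =>
    match π.just k with
    | some (Sum.inl (i, j, x)) =>
      if ((π.just j).isNone || isMergeB π j) = true then
        ((if (π.just j).isNone = true then ([] : List (Deriv V))
            else (build π f j).1 ++ [(build π f j).2]) ++ (build π f i).1,
         Deriv.mk ((build π f i).2.lines ++ [(π.clause j, none),
            (π.clause k, some (Sum.inl ((build π f i).2.length - 1, (build π f i).2.length, x)))]))
      else
        ((if (π.just i).isNone = true then ([] : List (Deriv V))
            else (build π f i).1 ++ [(build π f i).2]) ++ (build π f j).1,
         Deriv.mk ((build π f j).2.lines ++ [(π.clause i, none),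
            (π.clause k, some (Sum.inl ((build π f j).2.length, (build π f j).2.length - 1, x)))]))
    | _ => ([], ⟨[(π.clause k, none)]⟩)

theorem pgood_nil {Ax : Set (Clause V)} : PGood Ax ([] : List (Deriv V)) := by
  intro t ht
  exact absurd ht (Nat.not_lt_zero t)

theorem axiom_constituent {Ax : Set (Clause V)} {C : Clause V} (hC : C ∈ Ax) :
    (Deriv.mk [(C, none)]).Valid (Ax ∪ LemSet ([] : List (Deriv V))) ∧
    (Deriv.mk [(C, none)]).Input ∧
    (Deriv.mk [(C, none)]).lastClause = C := by
  refine ⟨⟨by simp [Deriv.length], ?_⟩, ?_, rfl⟩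
  · intro m hm
    have hm0 : m = 0 := by simp [Deriv.length] at hm; omega
    subst hm0
    have hj : (Deriv.mk [(C, none)] : Deriv V).just 0 = none := rfl
    simp only [Deriv.ValidLine, hj]
    exact Or.inl hC
  · intro k i j y hk
    rcases k with _ | k
    · cases hk
    · have : (Deriv.mk [(C, none)] : Deriv V).just (k + 1) = none := by
        simp only [Deriv.just]
        rw [List.getD_eq_default]
        simp
      rw [this] at hk; cases hk

theorem build_good (Ax : Set (Clause V)) (π : Deriv V) (hv : π.Valid Ax) (hmr : π.MergeRes) :
    ∀ f k, k < f → k < π.length →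
      PGood Ax (build π f k).1 ∧
      (build π f k).2.Valid (Ax ∪ LemSet (build π f k).1) ∧
      (build π f k).2.Input ∧
      (build π f k).2.lastClause = π.clause k ∧
      (π.IsMergeLine k → (build π f k).2.IsMergeLine ((build π f k).2.length - 1)) := by
  intro f
  induction f with
  | zero => intro k hk; omega
  | succ f ih =>
    intro k hkf hkl
    have hvk := hv.2 k hkl
    cases hj : π.just k with
    | none =>
      simp only [Deriv.ValidLine, hj] at hvk
      simp only [build, hj]
      obtain ⟨v, i, lc⟩ := axiom_constituent (Ax := Ax) hvk
      refine ⟨pgood_nil, v, i, lc, ?_⟩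
      rintro ⟨a, b, y, hh, -⟩
      rw [hj] at hh; cases hh
    | some v =>
      rcases v with ⟨i, j, x⟩ | m
      · -- resolution step
        simp only [Deriv.ValidLine, hj] at hvk
        obtain ⟨hik, hjk, hxt, hxf, hck⟩ := hvk
        have hil : i < π.length := by omega
        have hjl : j < π.length := by omega
        have hif : i < f := by omega
        have hjf : j < f := by omega
        obtain ⟨hPi, hDi, hini, hlci, hmi⟩ := ih i hif hil
        obtain ⟨hPj, hDj, hinj, hlcj, hmj⟩ := ih j hjf hjl
        have mergegoal : ∀ D' : Deriv V,
            ((∃ l, l ∈ (π.clause i).erase (x, true) ∧ l ∈ (π.clause j).erase (x, false)) →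
              D'.IsMergeLine (D'.length - 1)) →
            (π.IsMergeLine k → D'.IsMergeLine (D'.length - 1)) := by
          rintro D' hcond ⟨a, b, y, hh, l, hl1, hl2⟩
          rw [hj] at hh
          simp only [Option.some.injEq, Sum.inl.injEq, Prod.mk.injEq] at hh
          obtain ⟨rfl, rfl, rfl⟩ := hh
          exact hcond ⟨l, hl1, hl2⟩
        by_cases hb : ((π.just j).isNone || isMergeB π j) = true
        · simp only [build, hj, if_pos hb]
          by_cases hax : (π.just j).isNone = true
          · rw [if_pos hax]
            have hjnone : π.just j = none := Option.isNone_iff_eq_none.1 hax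
            have hvj := hv.2 j hjl
            simp only [Deriv.ValidLine, hjnone] at hvj
            have hB : π.clause j ∈ Ax ∪ LemSet ([] : List (Deriv V)) := Or.inl hvj
            obtain ⟨g1, g2, g3, g4, g5⟩ := assemble pgood_nil hPi hDi hini hB
              (Or.inl ⟨rfl, rfl, hlci, rfl⟩) hxt hxf hck
            exact ⟨g1, g2, g3, g4, mergegoal _ g5⟩
          · rw [if_neg hax]
            have hmgj : π.IsMergeLine j := by
              rw [Bool.or_eq_true] at hb
              rcases hb with hb | hb
              · exact absurd hb hax
              · exact isMergeB_iff.1 hb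
            have hPb : PGood Ax ((build π f j).1 ++ [(build π f j).2]) :=
              pgood_append hPj (pgood_single hDj hinj (hmj hmgj))
            have hB : π.clause j ∈ Ax ∪ LemSet ((build π f j).1 ++ [(build π f j).2]) := by
              refine Or.inr ⟨(build π f j).1.length, by simp, ?_⟩
              rw [seqGet_append_right le_rfl, Nat.sub_self]
              exact hlcj.symm
            obtain ⟨g1, g2, g3, g4, g5⟩ := assemble hPb hPi hDi hini hB
              (Or.inl ⟨rfl, rfl, hlci, rfl⟩) hxt hxf hck
            exact ⟨g1, g2, g3, g4, mergegoal _ g5⟩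
        · simp only [build, hj, if_neg hb]
          have hjnn : ¬ (π.just j).isNone = true := fun h => hb (by rw [h]; rfl)
          have hjnm : ¬ π.IsMergeLine j := fun h => hb (by rw [isMergeB_iff.2 h, Bool.or_true])
          have oki : π.just i = none ∨ π.IsMergeLine i := by
            rcases hmr k i j x hj with h | h
            · exact h
            · rcases h with h | h
              · exact absurd (Option.isNone_iff_eq_none.2 h) hjnn
              · exact absurd h hjnm
          by_cases hax : (π.just i).isNone = true
          · rw [if_pos hax]
            have hinone : π.just i = none := Option.isNone_iff_eq_none.1 hax
            have hvi := hv.2 i hil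
            simp only [Deriv.ValidLine, hinone] at hvi
            have hB : π.clause i ∈ Ax ∪ LemSet ([] : List (Deriv V)) := Or.inl hvi
            obtain ⟨g1, g2, g3, g4, g5⟩ := assemble pgood_nil hPj hDj hinj hB
              (Or.inr ⟨rfl, rfl, hlcj, rfl⟩) hxt hxf hck
            exact ⟨g1, g2, g3, g4, mergegoal _ g5⟩
          · rw [if_neg hax]
            have hmgi : π.IsMergeLine i := by
              rcases oki with h | h
              · exact absurd (Option.isNone_iff_eq_none.2 h) hax
              · exact h
            have hPb : PGood Ax ((build π f i).1 ++ [(build π f i).2]) :=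
              pgood_append hPi (pgood_single hDi hini (hmi hmgi))
            have hB : π.clause i ∈ Ax ∪ LemSet ((build π f i).1 ++ [(build π f i).2]) := by
              refine Or.inr ⟨(build π f i).1.length, by simp, ?_⟩
              rw [seqGet_append_right le_rfl, Nat.sub_self]
              exact hlci.symm
            obtain ⟨g1, g2, g3, g4, g5⟩ := assemble hPb hPj hDj hinj hB
              (Or.inr ⟨rfl, rfl, hlcj, rfl⟩) hxt hxf hck
            exact ⟨g1, g2, g3, g4, mergegoal _ g5⟩
      · -- weakening: impossible in a Valid (w = false) derivation
        simp only [Deriv.ValidLine, hj] at hvk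
        exact absurd hvk.1 (by simp)

end Stmt5Aux3
/-- a tree-like merge resolution derivation can be decomposed into an
input-structured sequence of input derivations in which every lemma is a merge. -/
theorem stmt5 {V : Type} [DecidableEq V] (Ax : Set (Clause V)) (π : Deriv V)
    (hv : π.Valid Ax) (ht : π.TreeLike) (hmr : π.MergeRes) :
    ∃ S : List (Deriv V), SeqValid Ax S false ∧ MergeLemmas S ∧
      (seqGet S (S.length - 1)).lastClause = π.lastClause := by
  have h0 : 0 < π.length := hv.1
  obtain ⟨hP, hD, hin, hlc, -⟩ :=
    build_good Ax π hv hmr π.length (π.length - 1) (by omega) (by omega)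
  set P := (build π π.length (π.length - 1)).1 with hPdef
  set D := (build π π.length (π.length - 1)).2 with hDdef
  refine ⟨P ++ [D], ⟨by simp, ?_⟩, ?_, ?_⟩
  · intro t ht'
    rw [List.length_append, List.length_singleton] at ht'
    by_cases h : t < P.length
    · rw [seqGet_append_left h]
      obtain ⟨v, i, -⟩ := hP t h
      refine ⟨valid_mono ?_ v, i⟩
      intro C hC
      rcases hC with hC | hC
      · exact Or.inl hC
      · obtain ⟨t', ht'', rfl⟩ := hC
        exact Or.inr ⟨t', ht'', congrArg _ (seqGet_append_left (ht''.trans h)).symm⟩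
    · have ht0 : t = P.length := by omega
      subst ht0
      rw [seqGet_append_right le_rfl, Nat.sub_self]
      refine ⟨valid_mono ?_ hD, hin⟩
      intro C hC
      rcases hC with hC | hC
      · exact Or.inl hC
      · obtain ⟨t', ht'', rfl⟩ := hC
        exact Or.inr ⟨t', ht'', congrArg _ (seqGet_append_left ht'').symm⟩
  · intro t ht'
    rw [List.length_append, List.length_singleton] at ht'
    have h : t < P.length := by omega
    rw [seqGet_append_left h]
    exact (hP t h).2.2
  · have hlen : (P ++ [D]).length - 1 = P.length := by simp
    rw [hlen, seqGet_append_right le_rfl, Nat.sub_self]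
    exact hlc
end

section
/- In a conflict derivation arising from a valid CDCL trail, the first asserting clause (the 1UIP clause) is a merge, i.e., when it is derived as Res(C_{j+1}, D_{j+1}), the two premises share a common literal. -/
open Finset

/-- a CDCL trail: a sequence of assigned literals, each with an optional reason clause
(`none` means a decision) -/
abbrev Trail := List (Lit ℕ × Option (Clause ℕ))

def tlit (τ : Trail) (p : ℕ) : Lit ℕ := (τ.getD p ((0, true), none)).1

def treason (τ : Trail) (p : ℕ) : Option (Clause ℕ) := (τ.getD p ((0, true), none)).2

/-- the literal is assigned by the first `i` positions of the trail -/
def Assigned (τ : Trail) (i : ℕ) (l : Lit ℕ) : Prop := ∃ p < i, tlit τ p = l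

def FalsifiedBy (τ : Trail) (i : ℕ) (C : Clause ℕ) : Prop :=
  ∀ l ∈ C, Assigned τ i (Lit.negate l)

/-- the clause is unit, propagating `l`, under the first `i` positions of the trail -/
def UnitTo (τ : Trail) (i : ℕ) (C : Clause ℕ) (l : Lit ℕ) : Prop :=
  l ∈ C ∧ ¬ Assigned τ i l ∧ ¬ Assigned τ i (Lit.negate l) ∧
    ∀ l' ∈ C, l' ≠ l → Assigned τ i (Lit.negate l')

/-- valid trail: distinct variables, every propagation has a correct reason from `F`,
and decisions are made only on unassigned variables when no propagation applies -/
def ValidTrail (F : Set (Clause ℕ)) (τ : Trail) : Prop :=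
  (∀ p < τ.length, ∀ q < τ.length, p ≠ q → (tlit τ p).1 ≠ (tlit τ q).1) ∧
    ∀ p < τ.length,
      match treason τ p with
      | some C => C ∈ F ∧ UnitTo τ p C (tlit τ p)
      | none => ¬ Assigned τ p (tlit τ p) ∧ ¬ Assigned τ p (Lit.negate (tlit τ p)) ∧
          ∀ C ∈ F, ∀ l, ¬ UnitTo τ p C l

/-- conflict-analysis clauses counted from the conflict: `confl τ D0 s = D_{|τ|-s}` -/
def confl (τ : Trail) (D0 : Clause ℕ) : ℕ → Clause ℕ
  | 0 => D0
  | s + 1 =>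
    let i := τ.length - 1 - s
    let D := confl τ D0 s
    match treason τ i with
    | some C =>
        if Lit.negate (tlit τ i) ∈ D then
          D.erase (Lit.negate (tlit τ i)) ∪ C.erase (tlit τ i)
        else D
    | none => D

/-- the clause `D_j` of the conflict derivation -/
def Dseq (τ : Trail) (D0 : Clause ℕ) (j : ℕ) : Clause ℕ := confl τ D0 (τ.length - j)

/-- asserting: exactly one literal of the clause is falsified at the last decision
level, i.e. at a trail position ≥ `istar` (the position of the last decision) -/
def Asserting (τ : Trail) (istar : ℕ) (D : Clause ℕ) : Prop :=
  ∃! l : Lit ℕ, l ∈ D ∧ ∃ p, istar ≤ p ∧ p < τ.length ∧ tlit τ p = Lit.negate l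

/-- the 1UIP clause `D_j = Res(C, D_{j+1})` of a conflict derivation over
a valid trail is a merge: the two premises share a literal besides the pivot. -/
theorem stmt7 (F : Set (Clause ℕ)) (τ : Trail) (hτ : ValidTrail F τ)
    (istar : ℕ) (h1 : istar < τ.length) (h2 : treason τ istar = none)
    (h3 : ∀ p, istar < p → p < τ.length → (treason τ p).isSome = true)
    (D0 : Clause ℕ) (hD0 : D0 ∈ F) (hfals : FalsifiedBy τ τ.length D0)
    (j : ℕ) (hj1 : istar ≤ j) (hj2 : j < τ.length)
    (C : Clause ℕ) (hreason : treason τ j = some C)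
    (hres : Lit.negate (tlit τ j) ∈ Dseq τ D0 (j + 1))
    (hass : Asserting τ istar (Dseq τ D0 j))
    (h1uip : ∀ j', j < j' → j' ≤ τ.length → ¬ Asserting τ istar (Dseq τ D0 j')) :
    ∃ l, l ∈ Dseq τ D0 (j + 1) ∧ l ∈ C ∧ l.1 ≠ (tlit τ j).1 := by
  obtain ⟨hdist, hmatch⟩ := hτ
  -- unit propagation facts at position j
  have hj := hmatch j hj2
  rw [hreason] at hj
  obtain ⟨hCF, hLmem, hLun, hLnun, hothers⟩ := hj
  -- decision facts at istar
  have hist := hmatch istar h1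
  rw [h2] at hist
  obtain ⟨-, -, hnounit⟩ := hist
  -- C has a literal besides the pivot falsified at the last level
  have hC2 : ∃ l, l ∈ C ∧ l ≠ tlit τ j ∧
      ∃ q, istar ≤ q ∧ q < τ.length ∧ tlit τ q = Lit.negate l := by
    by_contra h
    push_neg at h
    apply hnounit C hCF (tlit τ j)
    refine ⟨hLmem, ?_, ?_, ?_⟩
    · rintro ⟨p, hp, hpl⟩
      exact hLun ⟨p, lt_of_lt_of_le hp hj1, hpl⟩
    · rintro ⟨p, hp, hpl⟩
      exact hLnun ⟨p, lt_of_lt_of_le hp hj1, hpl⟩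
    · intro l' hl' hne
      obtain ⟨q, hq, hql⟩ := hothers l' hl' hne
      by_cases hqi : istar ≤ q
      · exact absurd hql (h l' hl' hne q hqi (lt_trans hq hj2))
      · exact ⟨q, Nat.lt_of_not_le hqi, hql⟩
  obtain ⟨lC, hlC, hlCne, hlClev⟩ := hC2
  -- D_{j+1} has a last-level literal besides the pivot (else it would be asserting)
  have hPpiv : Lit.negate (tlit τ j) ∈ Dseq τ D0 (j + 1) ∧
      ∃ p, istar ≤ p ∧ p < τ.length ∧ tlit τ p = Lit.negate (Lit.negate (tlit τ j)) :=
    ⟨hres, j, hj1, hj2, by simp [Lit.negate]⟩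
  have hD2 : ∃ l, (l ∈ Dseq τ D0 (j + 1) ∧
      ∃ p, istar ≤ p ∧ p < τ.length ∧ tlit τ p = Lit.negate l) ∧
      l ≠ Lit.negate (tlit τ j) := by
    by_contra h
    push_neg at h
    exact h1uip (j + 1) (Nat.lt_succ_self j) hj2 ⟨Lit.negate (tlit τ j), hPpiv, h⟩
  obtain ⟨lD, ⟨hlD, hlDlev⟩, hlDne⟩ := hD2
  -- unfold the resolution step
  have hDj : Dseq τ D0 j =
      (Dseq τ D0 (j + 1)).erase (Lit.negate (tlit τ j)) ∪ C.erase (tlit τ j) := by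
    have hs : τ.length - j = (τ.length - (j + 1)) + 1 := by omega
    have hi : τ.length - 1 - (τ.length - (j + 1)) = j := by omega
    show confl τ D0 (τ.length - j) = _
    rw [hs]
    simp only [confl, hi, hreason]
    exact if_pos hres
  -- both literals lie in D_j and are at the last level; assertingness identifies them
  have hmemD : lD ∈ Dseq τ D0 j := by
    rw [hDj]
    exact Finset.mem_union_left _ (Finset.mem_erase.mpr ⟨hlDne, hlD⟩)
  have hmemC : lC ∈ Dseq τ D0 j := by
    rw [hDj]
    exact Finset.mem_union_right _ (Finset.mem_erase.mpr ⟨hlCne, hlC⟩)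
  have heq : lD = lC := hass.unique ⟨hmemD, hlDlev⟩ ⟨hmemC, hlClev⟩
  refine ⟨lD, hlD, heq ▸ hlC, ?_⟩
  intro hvar
  by_cases hb : lD.2 = (tlit τ j).2
  · exact hlCne (heq ▸ (Prod.ext hvar hb))
  · have hb' : lD.2 = !(tlit τ j).2 := by
      cases h2' : lD.2 <;> cases h3' : (tlit τ j).2 <;> simp_all
    exact hlDne (Prod.ext hvar hb')
end

section
/- Let η be a resolution derivation from F_{ℓ,1,n} of a clause C supported only on W variables such that η depends on (uses) an X axiom. Then the length of η is at least (n−2)(ℓ − μ(C))/2, where μ(C) is the number of W-blocks j such that C mentions some variable w_{j,k}. -/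
open Finset

section Aux

set_option linter.unusedSectionVars false

open Deriv

variable {V : Type} [DecidableEq V] {π : Deriv V} {Ax : Set (Clause V)}

lemma clause_eq_empty {i : ℕ} (h : π.length ≤ i) : π.clause i = ∅ := by
  unfold Deriv.clause
  rw [List.getD_eq_default _ _ h]

lemma just_eq_none {i : ℕ} (h : π.length ≤ i) : π.just i = none := by
  unfold Deriv.just
  rw [List.getD_eq_default _ _ h]

lemma validLine_none (hv : π.Valid Ax) {t : ℕ} (ht : t < π.length)
    (hj : π.just t = none) : π.clause t ∈ Ax := by
  have h := hv.2 t ht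
  unfold Deriv.ValidLine at h
  rw [hj] at h
  exact h

lemma validLine_inl (hv : π.Valid Ax) {t i j : ℕ} {x : V} (ht : t < π.length)
    (hj : π.just t = some (Sum.inl (i, j, x))) :
    i < t ∧ j < t ∧ (x, true) ∈ π.clause i ∧ (x, false) ∈ π.clause j ∧
      π.clause t = Deriv.resolve (π.clause i) (π.clause j) x := by
  have h := hv.2 t ht
  unfold Deriv.ValidLine at h
  rw [hj] at h
  exact h

lemma no_weaken (hv : π.Valid Ax) {t i : ℕ} (hj : π.just t = some (Sum.inr i)) : False := by
  have ht : t < π.length := by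
    by_contra ht
    rw [just_eq_none (le_of_not_gt ht)] at hj
    cases hj
  have h := hv.2 t ht
  unfold Deriv.ValidLine at h
  rw [hj] at h
  simp at h

lemma parent_lt (hv : π.Valid Ax) {i t : ℕ} (h : π.IsParent i t) : i < t ∧ t < π.length := by
  have ht : t < π.length := by
    by_contra ht
    have hn := just_eq_none (π := π) (le_of_not_gt ht)
    rcases h with ⟨j, x, h | h⟩ | h <;> rw [hn] at h <;> cases h
  rcases h with ⟨j, x, h | h⟩ | h
  · exact ⟨(validLine_inl hv ht h).1, ht⟩
  · exact ⟨(validLine_inl hv ht h).2.1, ht⟩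
  · exact absurd h (fun hh => no_weaken hv hh)

lemma reaches_trans {a b c : ℕ} (h1 : π.Reaches a b) (h2 : π.Reaches b c) : π.Reaches a c := by
  induction h2 with
  | refl => exact h1
  | step h p ih => exact ih.step p

lemma reaches_of_parent {i t f : ℕ} (hp : π.IsParent i t) (h : π.Reaches t f) :
    π.Reaches i f :=
  reaches_trans ((Deriv.Reaches.refl i).step hp) h

lemma isParent_left {t i j : ℕ} {x : V} (h : π.just t = some (Sum.inl (i, j, x))) :
    π.IsParent i t := Or.inl ⟨j, x, Or.inl h⟩

lemma isParent_right {t i j : ℕ} {x : V} (h : π.just t = some (Sum.inl (i, j, x))) :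
    π.IsParent j t := Or.inl ⟨i, x, Or.inr h⟩

lemma origin (hv : π.Valid Ax) : ∀ t, ∀ p ∈ π.clause t,
    ∃ a, π.IsAxiomLine a ∧ p ∈ π.clause a ∧ π.Reaches a t := by
  intro t
  induction t using Nat.strong_induction_on with
  | _ t ih =>
    intro p hp
    by_cases ht : t < π.length
    · rcases hj : π.just t with _ | (⟨i, j, x⟩ | i)
      · exact ⟨t, ⟨ht, hj⟩, hp, Deriv.Reaches.refl t⟩
      · obtain ⟨hi, hjlt, hxi, hxj, hres⟩ := validLine_inl hv ht hj
        rw [hres] at hp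
        rcases Finset.mem_union.mp hp with h | h
        · obtain ⟨a, ha, hpa, hr⟩ := ih i hi p (Finset.mem_of_mem_erase h)
          exact ⟨a, ha, hpa, hr.step (isParent_left hj)⟩
        · obtain ⟨a, ha, hpa, hr⟩ := ih j hjlt p (Finset.mem_of_mem_erase h)
          exact ⟨a, ha, hpa, hr.step (isParent_right hj)⟩
      · exact absurd hj (fun hh => no_weaken hv hh)
    · rw [clause_eq_empty (le_of_not_gt ht)] at hp
      exact absurd hp (Finset.notMem_empty p)

lemma elim1 (hv : π.Valid Ax) {p : Lit V} {t u : ℕ} (hr : π.Reaches t u)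
    (hp : p ∈ π.clause t) :
    p ∈ π.clause u ∨ ∃ a, π.IsAxiomLine a ∧ p.negate ∈ π.clause a ∧ π.Reaches a u := by
  induction hr with
  | refl => exact Or.inl hp
  | @step m u hr hpar ih =>
    rcases ih with hm | ⟨a, ha, hpa, hra⟩
    · have hu : u < π.length := (parent_lt hv hpar).2
      rcases hpar with ⟨q, x, hq | hq⟩ | hq
      · obtain ⟨_, _, hxm, hxq, hres⟩ := validLine_inl hv hu hq
        by_cases hpx : p = (x, true)
        · subst hpx
          obtain ⟨a, ha, hpa, hra⟩ := origin hv q (x, false) hxq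
          refine Or.inr ⟨a, ha, ?_, hra.step (isParent_right hq)⟩
          simpa [Lit.negate] using hpa
        · left
          rw [hres]
          exact Finset.mem_union_left _ (Finset.mem_erase.mpr ⟨hpx, hm⟩)
      · obtain ⟨_, _, hxq, hxm, hres⟩ := validLine_inl hv hu hq
        by_cases hpx : p = (x, false)
        · subst hpx
          obtain ⟨a, ha, hpa, hra⟩ := origin hv q (x, true) hxq
          refine Or.inr ⟨a, ha, ?_, hra.step (isParent_left hq)⟩
          simpa [Lit.negate] using hpa
        · left
          rw [hres]
          exact Finset.mem_union_right _ (Finset.mem_erase.mpr ⟨hpx, hm⟩)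
      · exact absurd hq (fun hh => no_weaken hv hh)
    · exact Or.inr ⟨a, ha, hpa, hra.step hpar⟩

end Aux

section FVFacts

lemma inr_lit_eq {j a j' a' : ℕ} {c c' : Bool}
    (h : ((Sum.inr (j, a), c) : Lit FV) = ((Sum.inr (j', a'), c') : Lit FV)) :
    j = j' ∧ a = a' ∧ c = c' := by
  have h1 := (Prod.ext_iff.mp h).1
  have h2 := (Prod.ext_iff.mp h).2
  have h3 := Sum.inr.inj h1
  exact ⟨(Prod.ext_iff.mp h3).1, (Prod.ext_iff.mp h3).2, h2⟩

lemma ihat_eq {l i : ℕ} (h1 : 1 ≤ i) (h2 : i ≤ l) : ihat l i = i := by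
  unfold ihat
  rcases eq_or_lt_of_le h2 with rfl | h
  · simp [Nat.mod_self]
  · rw [Nat.mod_eq_of_lt h]
    simp
    omega

lemma mem_Wax {j k : ℕ} {b : Bool} {p : Lit FV} :
    p ∈ Wax j k b ↔ p = ((Sum.inr (j, k), b) : Lit FV) ∨ p = ((Sum.inr (j, k + 1), !b) : Lit FV) := by
  cases b <;> simp [Wax, wl]

lemma mem_Xax {l n i : ℕ} {b : Bool} {p : Lit FV} :
    p ∈ Xax l 1 n i b ↔ p = ((Sum.inr (ihat l i, 1), b) : Lit FV) ∨
      p = ((Sum.inr (ihat l i, n), b) : Lit FV) ∨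
      (i ≠ 1 ∧ p = ((Sum.inl (i - 1), false) : Lit FV)) ∨
      (i ≠ l ∧ p = ((Sum.inl i, true) : Lit FV)) := by
  simp only [Xax, one_mul, Finset.mem_union, Finset.mem_insert, Finset.mem_singleton, wl, xl]
  split_ifs <;> simp_all <;> tauto

lemma F_mem_inl_false {l n s : ℕ} {C : Clause FV} (hC : C ∈ Fformula l 1 n)
    (hp : ((Sum.inl s, false) : Lit FV) ∈ C) :
    ∃ b, 1 ≤ s + 1 ∧ s + 1 ≤ l ∧ C = Xax l 1 n (s + 1) b := by
  rcases hC with ⟨j, k, b, _, _, _, _, rfl⟩ | ⟨i, b, hi1, hil, rfl⟩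
  · rw [mem_Wax] at hp
    rcases hp with h | h <;> simp at h
  · rw [one_mul] at hil
    rw [mem_Xax] at hp
    rcases hp with h | h | ⟨hne, h⟩ | ⟨_, h⟩
    · simp at h
    · simp at h
    · have hs : s = i - 1 := by
        have := (Prod.ext_iff.mp h).1
        exact Sum.inl.inj this
      have : i = s + 1 := by omega
      subst this
      exact ⟨b, by omega, by omega, rfl⟩
    · simp at h

lemma F_mem_inl_true {l n s : ℕ} {C : Clause FV} (hC : C ∈ Fformula l 1 n)
    (hp : ((Sum.inl s, true) : Lit FV) ∈ C) :
    ∃ b, 1 ≤ s ∧ s ≤ l ∧ C = Xax l 1 n s b := by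
  rcases hC with ⟨j, k, b, _, _, _, _, rfl⟩ | ⟨i, b, hi1, hil, rfl⟩
  · rw [mem_Wax] at hp
    rcases hp with h | h <;> simp at h
  · rw [one_mul] at hil
    rw [mem_Xax] at hp
    rcases hp with h | h | ⟨_, h⟩ | ⟨hne, h⟩
    · simp at h
    · simp at h
    · simp at h
    · have hs : s = i := by
        have := (Prod.ext_iff.mp h).1
        exact Sum.inl.inj this
      subst hs
      exact ⟨b, by omega, by omega, rfl⟩

lemma F_mem_inr_mid {l n j k : ℕ} {c : Bool} {C : Clause FV} (hC : C ∈ Fformula l 1 n)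
    (hn : 3 ≤ n) (hk2 : 2 ≤ k) (hkn : k ≤ n - 1)
    (hp : ((Sum.inr (j, k), c) : Lit FV) ∈ C) :
    ∃ k₀ b, C = Wax j k₀ b ∧ (k = k₀ ∨ k = k₀ + 1) := by
  rcases hC with ⟨j₀, k₀, b, _, _, _, _, rfl⟩ | ⟨i, b, hi1, hil, rfl⟩
  · rw [mem_Wax] at hp
    rcases hp with h | h
    · obtain ⟨e1, e2, _⟩ := inr_lit_eq h
      exact ⟨k₀, b, by rw [e1], Or.inl e2⟩
    · obtain ⟨e1, e2, _⟩ := inr_lit_eq h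
      exact ⟨k₀, b, by rw [e1], Or.inr e2⟩
  · rw [mem_Xax] at hp
    rcases hp with h | h | ⟨_, h⟩ | ⟨_, h⟩
    · have h' := (inr_lit_eq h).2.1
      omega
    · have h' := (inr_lit_eq h).2.1
      omega
    · simp at h
    · simp at h

end FVFacts

section Invariant

/-- `D` contains a block-`j` literal whose sign agrees with the sign function `f`. -/
def SatF (j : ℕ) (f : ℕ → Bool) (D : Clause FV) : Prop :=
  ∃ a : ℕ, ((Sum.inr (j, a), f a) : Lit FV) ∈ D

/-- `D` mentions no block-`j` variable. -/
def NoJ (j : ℕ) (D : Clause FV) : Prop :=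
  ∀ (a : ℕ) (c : Bool), ((Sum.inr (j, a), c) : Lit FV) ∉ D

def alphaF (k : ℕ) : ℕ → Bool := fun a => decide (a < k)

def betaF (k : ℕ) : ℕ → Bool := fun a => !decide (a < k)

def GInv (j k : ℕ) (D : Clause FV) : Prop :=
  (SatF j (alphaF k) D ∧ SatF j (betaF k) D) ∨ NoJ j D

lemma satF_resolve {j : ℕ} {f : ℕ → Bool} {P Q : Clause FV} {x : FV}
    (hP : SatF j f P) (hQ : SatF j f Q) : SatF j f (Deriv.resolve P Q x) := by
  obtain ⟨a, ha⟩ := hP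
  obtain ⟨b, hb⟩ := hQ
  by_cases h1 : ((Sum.inr (j, a), f a) : Lit FV) = (x, true)
  · by_cases h2 : ((Sum.inr (j, b), f b) : Lit FV) = (x, false)
    · exfalso
      rw [Prod.ext_iff] at h1 h2
      obtain ⟨hx1, hv1⟩ := h1
      obtain ⟨hx2, hv2⟩ := h2
      rw [← hx1] at hx2
      have hab : a = b := by simpa using hx2.symm
      rw [← hab, hv1] at hv2
      simp at hv2
    · exact ⟨b, Finset.mem_union_right _ (Finset.mem_erase.mpr ⟨h2, hb⟩)⟩
  · exact ⟨a, Finset.mem_union_left _ (Finset.mem_erase.mpr ⟨h1, ha⟩)⟩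

lemma satF_noJ_resolve {j : ℕ} {f : ℕ → Bool} {P Q : Clause FV} {x : FV}
    (hP : SatF j f P) (hQ : NoJ j Q) (hx : ((x, false) : Lit FV) ∈ Q) :
    SatF j f (Deriv.resolve P Q x) := by
  obtain ⟨a, ha⟩ := hP
  by_cases h1 : ((Sum.inr (j, a), f a) : Lit FV) = (x, true)
  · exfalso
    have hx1 : x = Sum.inr (j, a) := (Prod.ext_iff.mp h1).1.symm
    exact hQ a false (by rw [hx1] at hx; exact hx)
  · exact ⟨a, Finset.mem_union_left _ (Finset.mem_erase.mpr ⟨h1, ha⟩)⟩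

lemma noJ_satF_resolve {j : ℕ} {f : ℕ → Bool} {P Q : Clause FV} {x : FV}
    (hP : NoJ j P) (hQ : SatF j f Q) (hx : ((x, true) : Lit FV) ∈ P) :
    SatF j f (Deriv.resolve P Q x) := by
  obtain ⟨b, hb⟩ := hQ
  by_cases h2 : ((Sum.inr (j, b), f b) : Lit FV) = (x, false)
  · exfalso
    have hx2 : x = Sum.inr (j, b) := (Prod.ext_iff.mp h2).1.symm
    exact hP b true (by rw [hx2] at hx; exact hx)
  · exact ⟨b, Finset.mem_union_right _ (Finset.mem_erase.mpr ⟨h2, hb⟩)⟩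

lemma noJ_resolve {j : ℕ} {P Q : Clause FV} {x : FV}
    (hP : NoJ j P) (hQ : NoJ j Q) : NoJ j (Deriv.resolve P Q x) := by
  intro a c h
  rcases Finset.mem_union.mp h with h | h
  · exact hP a c (Finset.mem_of_mem_erase h)
  · exact hQ a c (Finset.mem_of_mem_erase h)

lemma gInv_resolve {j k : ℕ} {P Q : Clause FV} {x : FV}
    (hxP : ((x, true) : Lit FV) ∈ P) (hxQ : ((x, false) : Lit FV) ∈ Q)
    (hP : GInv j k P) (hQ : GInv j k Q) : GInv j k (Deriv.resolve P Q x) := by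
  rcases hP with ⟨h1, h2⟩ | hP <;> rcases hQ with ⟨g1, g2⟩ | hQ
  · exact Or.inl ⟨satF_resolve h1 g1, satF_resolve h2 g2⟩
  · exact Or.inl ⟨satF_noJ_resolve h1 hQ hxQ, satF_noJ_resolve h2 hQ hxQ⟩
  · exact Or.inl ⟨noJ_satF_resolve hP g1 hxP, noJ_satF_resolve hP g2 hxP⟩
  · exact Or.inr (noJ_resolve hP hQ)

lemma wInv_resolve_left {j k : ℕ} {P Q : Clause FV} {x : FV}
    (hxQ : ((x, false) : Lit FV) ∈ Q)
    (hP : SatF j (alphaF k) P ∧ SatF j (betaF k) P) (hQ : GInv j k Q) :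
    SatF j (alphaF k) (Deriv.resolve P Q x) ∧ SatF j (betaF k) (Deriv.resolve P Q x) := by
  rcases hQ with ⟨g1, g2⟩ | hQ
  · exact ⟨satF_resolve hP.1 g1, satF_resolve hP.2 g2⟩
  · exact ⟨satF_noJ_resolve hP.1 hQ hxQ, satF_noJ_resolve hP.2 hQ hxQ⟩

lemma wInv_resolve_right {j k : ℕ} {P Q : Clause FV} {x : FV}
    (hxP : ((x, true) : Lit FV) ∈ P)
    (hP : GInv j k P) (hQ : SatF j (alphaF k) Q ∧ SatF j (betaF k) Q) :
    SatF j (alphaF k) (Deriv.resolve P Q x) ∧ SatF j (betaF k) (Deriv.resolve P Q x) := by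
  rcases hP with ⟨g1, g2⟩ | hP
  · exact ⟨satF_resolve g1 hQ.1, satF_resolve g2 hQ.2⟩
  · exact ⟨noJ_satF_resolve hP hQ.1 hxP, noJ_satF_resolve hP hQ.2 hxP⟩

lemma satF_Xax {l n j k : ℕ} {b : Bool} (hn : 3 ≤ n) (hk2 : 2 ≤ k) (hkn : k ≤ n - 1)
    (hj1 : 1 ≤ j) (hjl : j ≤ l) :
    SatF j (alphaF k) (Xax l 1 n j b) ∧ SatF j (betaF k) (Xax l 1 n j b) := by
  have hih : ihat l j = j := ihat_eq hj1 hjl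
  have d1 : alphaF k 1 = true := by simp [alphaF]; omega
  have dn : alphaF k n = false := by simp [alphaF]; omega
  have e1 : betaF k 1 = false := by simp [betaF]; omega
  have en : betaF k n = true := by simp [betaF]; omega
  cases b
  · constructor
    · exact ⟨n, by rw [mem_Xax]; right; left; rw [hih, dn]⟩
    · exact ⟨1, by rw [mem_Xax]; left; rw [hih, e1]⟩
  · constructor
    · exact ⟨1, by rw [mem_Xax]; left; rw [hih, d1]⟩
    · exact ⟨n, by rw [mem_Xax]; right; left; rw [hih, en]⟩

lemma gInv_axiom {l n j k : ℕ} {C : Clause FV} (hn : 3 ≤ n) (hk2 : 2 ≤ k) (hkn : k ≤ n - 1)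
    (hC : C ∈ Fformula l 1 n)
    (hmiss : ∀ c : Bool, ((Sum.inr (j, k), c) : Lit FV) ∉ C) : GInv j k C := by
  rcases hC with ⟨j₀, k₀, b, hj1, hjl, hk1, hk0n, rfl⟩ | ⟨i, b, hi1, hil, rfl⟩
  · by_cases hj : j₀ = j
    · subst hj
      have h1 : k₀ ≠ k := by
        intro h
        exact hmiss b (by rw [mem_Wax]; left; rw [h])
      have h2 : k₀ + 1 ≠ k := by
        intro h
        exact hmiss (!b) (by rw [mem_Wax]; right; rw [h])
      have hsp : k₀ + 1 < k ∨ k < k₀ := by omega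
      left
      rcases hsp with h | h
      · have da : alphaF k k₀ = true := by simp [alphaF]; omega
        have da' : alphaF k (k₀ + 1) = true := by simp [alphaF]; omega
        have db : betaF k k₀ = false := by simp [betaF]; omega
        have db' : betaF k (k₀ + 1) = false := by simp [betaF]; omega
        cases b
        · exact ⟨⟨k₀ + 1, by rw [mem_Wax]; right; simp [da']⟩,
            ⟨k₀, by rw [mem_Wax]; left; rw [db]⟩⟩
        · exact ⟨⟨k₀, by rw [mem_Wax]; left; rw [da]⟩,
            ⟨k₀ + 1, by rw [mem_Wax]; right; simp [db']⟩⟩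
      · have da : alphaF k k₀ = false := by simp [alphaF]; omega
        have da' : alphaF k (k₀ + 1) = false := by simp [alphaF]; omega
        have db : betaF k k₀ = true := by simp [betaF]; omega
        have db' : betaF k (k₀ + 1) = true := by simp [betaF]; omega
        cases b
        · exact ⟨⟨k₀, by rw [mem_Wax]; left; rw [da]⟩,
            ⟨k₀ + 1, by rw [mem_Wax]; right; simp [db']⟩⟩
        · exact ⟨⟨k₀ + 1, by rw [mem_Wax]; right; simp [da']⟩,
            ⟨k₀, by rw [mem_Wax]; left; rw [db]⟩⟩
    · right
      intro a c h
      rw [mem_Wax] at h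
      rcases h with h | h <;>
        exact hj (inr_lit_eq h).1.symm
  · by_cases hj : ihat l i = j
    · left
      have d1 : alphaF k 1 = true := by simp [alphaF]; omega
      have dn : alphaF k n = false := by simp [alphaF]; omega
      have e1 : betaF k 1 = false := by simp [betaF]; omega
      have en : betaF k n = true := by simp [betaF]; omega
      cases b
      · exact ⟨⟨n, by rw [mem_Xax]; right; left; rw [hj, dn]⟩,
          ⟨1, by rw [mem_Xax]; left; rw [hj, e1]⟩⟩
      · exact ⟨⟨1, by rw [mem_Xax]; left; rw [hj, d1]⟩,
          ⟨n, by rw [mem_Xax]; right; left; rw [hj, en]⟩⟩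
    · right
      intro a c h
      rw [mem_Xax] at h
      rcases h with h | h | ⟨_, h⟩ | ⟨_, h⟩
      · exact hj (inr_lit_eq h).1.symm
      · exact hj (inr_lit_eq h).1.symm
      · simp at h
      · simp at h

end Invariant


section Lines

variable {π : Deriv FV} {l n j k : ℕ}

lemma gInv_line (hv : π.Valid (Fformula l 1 n)) (hn : 3 ≤ n) (hk2 : 2 ≤ k) (hkn : k ≤ n - 1)
    (hmiss : ∀ t, π.IsAxiomLine t → π.Reaches t (π.length - 1) →
      ∀ c : Bool, ((Sum.inr (j, k), c) : Lit FV) ∉ π.clause t) :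
    ∀ t, π.Reaches t (π.length - 1) → GInv j k (π.clause t) := by
  intro t
  induction t using Nat.strong_induction_on with
  | _ t ih =>
    intro hr
    by_cases ht : t < π.length
    · rcases hj : π.just t with _ | (⟨i, i', x⟩ | i)
      · exact gInv_axiom hn hk2 hkn (validLine_none hv ht hj) (hmiss t ⟨ht, hj⟩ hr)
      · obtain ⟨hi, hi', hxi, hxi', hres⟩ := validLine_inl hv ht hj
        rw [hres]
        exact gInv_resolve hxi hxi'
          (ih i hi (reaches_of_parent (isParent_left hj) hr))
          (ih i' hi' (reaches_of_parent (isParent_right hj) hr))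
      · exact absurd hj fun hh => no_weaken hv hh
    · rw [clause_eq_empty (le_of_not_gt ht)]
      exact Or.inr fun a c h => absurd h (Finset.notMem_empty _)

lemma wInv_line (hv : π.Valid (Fformula l 1 n)) (hn : 3 ≤ n) (hk2 : 2 ≤ k) (hkn : k ≤ n - 1)
    (hmiss : ∀ t, π.IsAxiomLine t → π.Reaches t (π.length - 1) →
      ∀ c : Bool, ((Sum.inr (j, k), c) : Lit FV) ∉ π.clause t)
    (hj1 : 1 ≤ j) (hjl : j ≤ l) {a0 : ℕ} {b : Bool}
    (ha0 : π.clause a0 = Xax l 1 n j b) :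
    ∀ u, π.Reaches a0 u → π.Reaches u (π.length - 1) →
      SatF j (alphaF k) (π.clause u) ∧ SatF j (betaF k) (π.clause u) := by
  intro u hr
  induction hr with
  | refl =>
    intro _
    rw [ha0]
    exact satF_Xax hn hk2 hkn hj1 hjl
  | @step m u hr hpar ih =>
    intro hu
    have hm : π.Reaches m (π.length - 1) := reaches_of_parent hpar hu
    have hum := ih hm
    have hulen : u < π.length := (parent_lt hv hpar).2
    rcases hpar with ⟨q, x, hq | hq⟩ | hq
    · obtain ⟨_, hqlt, hxm, hxq, hres⟩ := validLine_inl hv hulen hq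
      have hG : GInv j k (π.clause q) :=
        gInv_line hv hn hk2 hkn hmiss q (reaches_of_parent (isParent_right hq) hu)
      rw [hres]
      exact wInv_resolve_left hxq hum hG
    · obtain ⟨hqlt, _, hxq, hxm, hres⟩ := validLine_inl hv hulen hq
      have hG : GInv j k (π.clause q) :=
        gInv_line hv hn hk2 hkn hmiss q (reaches_of_parent (isParent_left hq) hu)
      rw [hres]
      exact wInv_resolve_right hxq hG hum
    · exact absurd hq fun hh => no_weaken hv hh

/-- the derivation has an axiom line carrying a block-`j` X axiom that reaches the end -/
def UsedX (π : Deriv FV) (l n j : ℕ) : Prop :=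
  ∃ (b : Bool) (a : ℕ), π.IsAxiomLine a ∧ π.clause a = Xax l 1 n j b ∧
    π.Reaches a (π.length - 1)

lemma noX_in_C (hW : Wsupported π.lastClause) {s : ℕ} {c : Bool} :
    ((Sum.inl s, c) : Lit FV) ∉ π.clause (π.length - 1) := by
  intro h
  have := hW _ h
  simp at this

lemma step_up (hv : π.Valid (Fformula l 1 n)) (hW : Wsupported π.lastClause)
    {i' : ℕ} (h1 : 1 ≤ i') (h2 : i' < l) (hu : UsedX π l n i') : UsedX π l n (i' + 1) := by
  obtain ⟨b, a, ha, hca, hra⟩ := hu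
  have hp : ((Sum.inl i', true) : Lit FV) ∈ π.clause a := by
    rw [hca, mem_Xax]
    exact Or.inr (Or.inr (Or.inr ⟨by omega, rfl⟩))
  rcases elim1 hv hra hp with h | ⟨a', ha', hpa', hra'⟩
  · exact absurd h (noX_in_C hW)
  · have hca' : π.clause a' ∈ Fformula l 1 n := validLine_none hv ha'.1 ha'.2
    have hmem : ((Sum.inl i', false) : Lit FV) ∈ π.clause a' := by
      simpa [Lit.negate] using hpa'
    obtain ⟨b', _, _, hCeq⟩ := F_mem_inl_false hca' hmem
    exact ⟨b', a', ha', hCeq, hra'⟩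

lemma step_down (hv : π.Valid (Fformula l 1 n)) (hW : Wsupported π.lastClause)
    {i' : ℕ} (h1 : 2 ≤ i') (h2 : i' ≤ l) (hu : UsedX π l n i') : UsedX π l n (i' - 1) := by
  obtain ⟨b, a, ha, hca, hra⟩ := hu
  have hp : ((Sum.inl (i' - 1), false) : Lit FV) ∈ π.clause a := by
    rw [hca, mem_Xax]
    exact Or.inr (Or.inr (Or.inl ⟨by omega, rfl⟩))
  rcases elim1 hv hra hp with h | ⟨a', ha', hpa', hra'⟩
  · exact absurd h (noX_in_C hW)
  · have hca' : π.clause a' ∈ Fformula l 1 n := validLine_none hv ha'.1 ha'.2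
    have hmem : ((Sum.inl (i' - 1), true) : Lit FV) ∈ π.clause a' := by
      simpa [Lit.negate] using hpa'
    obtain ⟨b', _, _, hCeq⟩ := F_mem_inl_true hca' hmem
    exact ⟨b', a', ha', hCeq, hra'⟩

lemma usedX_all (hv : π.Valid (Fformula l 1 n)) (hW : Wsupported π.lastClause)
    (hX : ∃ i b, 1 ≤ i ∧ i ≤ l ∧ π.UsesAxiom (Xax l 1 n i b)) :
    ∀ j, 1 ≤ j → j ≤ l → UsedX π l n j := by
  obtain ⟨i, b, hi1, hil, i0, hax, hclause, hreach⟩ := hX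
  have hbase : UsedX π l n i := ⟨b, i0, hax, hclause, hreach⟩
  have hup : ∀ d, i + d ≤ l → UsedX π l n (i + d) := by
    intro d
    induction d with
    | zero => exact fun _ => hbase
    | succ d ihd =>
      intro hd
      exact step_up hv hW (i' := i + d) (by omega) (by omega) (ihd (by omega))
  have hdown : ∀ d, d < i → UsedX π l n (i - d) := by
    intro d
    induction d with
    | zero => exact fun _ => hbase
    | succ d ihd =>
      intro hd
      have h := step_down hv hW (i' := i - d) (by omega) (by omega) (ihd (by omega))
      have : i - (d + 1) = i - d - 1 := by omega
      rw [this]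
      exact h
  intro j hj1 hjl
  rcases le_or_gt i j with h | h
  · have := hup (j - i) (by omega)
    rwa [show i + (j - i) = j by omega] at this
  · have := hdown (i - j) (by omega)
    rwa [show i - (i - j) = j by omega] at this

end Lines


/-- a derivation from `F_{ℓ,1,n}` of a W-supported clause `C` that uses
an X axiom has length at least `(n−2)(ℓ−μ(C))/2`. -/
theorem stmt11 (l n : ℕ) (hl : 1 ≤ l) (hn : 2 ≤ n)
    (π : Deriv FV) (hv : π.Valid (Fformula l 1 n)) (hW : Wsupported π.lastClause)
    (hX : ∃ i b, 1 ≤ i ∧ i ≤ l ∧ π.UsesAxiom (Xax l 1 n i b)) :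
    (n - 2) * (l - mu π.lastClause) ≤ 2 * π.length := by
  by_cases hn3 : n < 3
  · have h0 : n - 2 = 0 := by omega
    simp [h0]
  push_neg at hn3
  classical
  set Bl : Finset ℕ := ((π.lastClause.filter fun lit => lit.1.isRight = true).image
    fun lit => (lit.1.getRight?.getD (0, 0)).1) with hBl
  have hmu : mu π.lastClause = Bl.card := rfl
  set U : Finset ℕ := (Finset.Icc 1 l).filter (fun j => j ∉ Bl) with hUdef
  have hUcard : l - mu π.lastClause ≤ U.card := by
    have h1 : (Finset.Icc 1 l).card = l := by simp
    have h2 := Finset.card_filter_add_card_filter_not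
      (s := Finset.Icc 1 l) (p := fun j => j ∈ Bl)
    have h3 : ((Finset.Icc 1 l).filter (fun j => j ∈ Bl)).card ≤ Bl.card :=
      Finset.card_le_card (fun x hx => (Finset.mem_filter.mp hx).2)
    have h4 : U.card = ((Finset.Icc 1 l).filter (fun j => ¬ j ∈ Bl)).card := rfl
    rw [hmu]
    omega
  have hUnm : ∀ j ∈ U, ∀ (a : ℕ) (c : Bool),
      ((Sum.inr (j, a), c) : Lit FV) ∉ π.lastClause := by
    intro j hjU a c h
    apply (Finset.mem_filter.mp hjU).2
    rw [hBl]
    exact Finset.mem_image.mpr ⟨(Sum.inr (j, a), c), Finset.mem_filter.mpr ⟨h, rfl⟩, rfl⟩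
  set s : Finset (ℕ × ℕ) := U ×ˢ Finset.Icc 2 (n - 1) with hsdef
  have hkey : ∀ p : ℕ × ℕ, ∃ t : ℕ, p ∈ s →
      (t < π.length ∧ π.IsAxiomLine t ∧ π.Reaches t (π.length - 1) ∧
        ∃ c : Bool, ((Sum.inr (p.1, p.2), c) : Lit FV) ∈ π.clause t) := by
    intro p
    by_cases hp : p ∈ s
    · obtain ⟨j, k⟩ := p
      obtain ⟨hjU, hk⟩ := Finset.mem_product.mp hp
      rw [Finset.mem_Icc] at hk
      have hjb := Finset.mem_Icc.mp (Finset.mem_filter.mp hjU).1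
      by_contra hcon
      push_neg at hcon
      have hmiss : ∀ t, π.IsAxiomLine t → π.Reaches t (π.length - 1) →
          ∀ c : Bool, ((Sum.inr (j, k), c) : Lit FV) ∉ π.clause t := by
        intro t hax hre c
        exact (hcon t).2 hax.1 hax hre c
      obtain ⟨b, a0, ha0, hc0, hr0⟩ := usedX_all hv hW hX j hjb.1 hjb.2
      have hS := wInv_line hv hn3 hk.1 hk.2 hmiss hjb.1 hjb.2 hc0 (π.length - 1) hr0
        (Deriv.Reaches.refl _)
      obtain ⟨⟨a, ha⟩, -⟩ := hS
      exact hUnm j hjU a _ ha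
    · exact ⟨0, fun h => absurd h hp⟩
  choose g hg using hkey
  have himg : ∀ p ∈ s, g p ∈ Finset.range π.length := by
    intro p hps
    exact Finset.mem_range.mpr (hg p hps).1
  have hfib : ∀ t ∈ Finset.range π.length, (s.filter fun p => g p = t).card ≤ 2 := by
    intro t _
    rcases (s.filter fun p => g p = t).eq_empty_or_nonempty with he | ⟨p₀, hp₀⟩
    · simp [he]
    · obtain ⟨hp₀s, hp₀t⟩ := Finset.mem_filter.mp hp₀
      have h₀ := hg p₀ hp₀s
      rw [hp₀t] at h₀
      obtain ⟨hlt, hax, hre, c₀, hc₀⟩ := h₀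
      have hk₀ := Finset.mem_Icc.mp (Finset.mem_product.mp hp₀s).2
      have hFt : π.clause t ∈ Fformula l 1 n := validLine_none hv hax.1 hax.2
      obtain ⟨k₀, b₀, hWeq, hkor⟩ := F_mem_inr_mid hFt hn3 hk₀.1 hk₀.2 hc₀
      have hsub : (s.filter fun p => g p = t) ⊆ {(p₀.1, k₀), (p₀.1, k₀ + 1)} := by
        intro p hp
        obtain ⟨hps, hgt⟩ := Finset.mem_filter.mp hp
        have h := hg p hps
        rw [hgt] at h
        obtain ⟨-, -, -, c, hc⟩ := h
        rw [hWeq, mem_Wax] at hc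
        rcases hc with h | h
        · obtain ⟨e1, e2, -⟩ := inr_lit_eq h
          exact Finset.mem_insert.mpr (Or.inl (Prod.ext_iff.mpr ⟨e1, e2⟩))
        · obtain ⟨e1, e2, -⟩ := inr_lit_eq h
          exact Finset.mem_insert.mpr
            (Or.inr (Finset.mem_singleton.mpr (Prod.ext_iff.mpr ⟨e1, e2⟩)))
      calc (s.filter fun p => g p = t).card
          ≤ ({(p₀.1, k₀), (p₀.1, k₀ + 1)} : Finset (ℕ × ℕ)).card :=
            Finset.card_le_card hsub
        _ ≤ 2 := le_trans (Finset.card_insert_le _ _) (by simp)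
  have hcount : s.card ≤ 2 * π.length := by
    have := Finset.card_le_mul_card_image_of_maps_to himg 2 hfib
    simpa using this
  have h1 : s.card = U.card * (n - 2) := by
    rw [hsdef, Finset.card_product, Nat.card_Icc]
    congr 1
  calc (n - 2) * (l - mu π.lastClause) ≤ (n - 2) * U.card :=
        Nat.mul_le_mul_left _ hUcard
    _ = U.card * (n - 2) := Nat.mul_comm _ _
    _ = s.card := h1.symm
    _ ≤ 2 * π.length := hcount
end
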